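/- arXiv:2002.06313 — 4 statements merged into one kernel-verified Lean document; each statement's English description precedes it below -/
import Mathlib

section
/- Let E₀ ⊂ 𝒞Ω and let E be an s-minimal set in Ω with respect to E₀. Then 𝒢(χ_E, Ω) ≤ 𝒢(u, Ω) for every u ∈ 𝒲^s(Ω) such that u = χ_{E₀} in 𝒞Ω. -/
open MeasureTheory Set Filter Metric ENNReal

noncomputable section
set_option maxHeartbeats 1000000

/-- Euclidean space `ℝⁿ`. -/
abbrev Rn (n : ℕ) : Type := EuclideanSpace ℝ (Fin n)

/-- `Q(Ω) := ℝ²ⁿ \ (𝒞Ω × 𝒞Ω)`. -/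
def QQ {n : ℕ} (Ω : Set (Rn n)) : Set (Rn n × Rn n) := (Ωᶜ ×ˢ Ωᶜ)ᶜ

/-- A bounded open set has Lipschitz boundary: near every boundary point, in suitable
orthonormal coordinates, the set coincides with the region above the graph of a
Lipschitz function. -/
def HasLipschitzBoundary {n : ℕ} (Ω : Set (Rn n)) : Prop :=
  ∀ x ∈ frontier Ω, ∃ r : ℝ, 0 < r ∧ ∃ ν : Rn n, ‖ν‖ = 1 ∧
    ∃ (L : NNReal) (ψ : Rn n → ℝ), LipschitzWith L ψ ∧
      Ω ∩ Metric.ball x r =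
        {y ∈ Metric.ball x r | ψ (y - (inner ℝ y ν : ℝ) • ν) < (inner ℝ y ν : ℝ)}

/-- The Gagliardo `W^{s,1}(Ω)` seminorm `[u]_{W^{s,1}(Ω)}` (as an extended real). -/
def gagliardo (n : ℕ) (s : ℝ) (Ω : Set (Rn n)) (u : Rn n → ℝ) : ℝ≥0∞ :=
  ∫⁻ x in Ω, ∫⁻ y in Ω, ENNReal.ofReal (|u x - u y| / dist x y ^ ((n : ℝ) + s))

/-- The space `𝒲^s(Ω)` of measurable functions `u : ℝⁿ → ℝ` whose restriction to `Ω`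
belongs to `W^{s,1}(Ω)`. -/
def WsSpace (n : ℕ) (s : ℝ) (Ω : Set (Rn n)) : Set (Rn n → ℝ) :=
  {u | Measurable u ∧ IntegrableOn u Ω ∧ gagliardo n s Ω u < ⊤}

/-- `u` is an `s`-minimal function in `Ω`. -/
def IsMinimalFn (n : ℕ) (s : ℝ) (Ω : Set (Rn n)) (u : Rn n → ℝ) : Prop :=
  u ∈ WsSpace n s Ω ∧
    ∀ v ∈ WsSpace n s Ω, (∀ᵐ x ∂(volume.restrict Ωᶜ), v x = u x) →
      ∫ p in QQ Ω, (|u p.1 - u p.2| - |v p.1 - v p.2|) / dist p.1 p.2 ^ ((n : ℝ) + s) ≤ 0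

/-- The characteristic function `χ_E`. -/
def chi {n : ℕ} (E : Set (Rn n)) : Rn n → ℝ := E.indicator (fun _ => (1 : ℝ))

/-- The `s`-fractional perimeter `Per_s(E, Ω)` (as an extended real). -/
def perS (n : ℕ) (s : ℝ) (Ω E : Set (Rn n)) : ℝ≥0∞ :=
  (1 / 2 : ℝ≥0∞) * ∫⁻ p in QQ Ω,
    ENNReal.ofReal (|chi E p.1 - chi E p.2| / dist p.1 p.2 ^ ((n : ℝ) + s))

/-- `E` is an `s`-minimal set in `Ω`. -/
def IsMinimalSet (n : ℕ) (s : ℝ) (Ω E : Set (Rn n)) : Prop :=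
  MeasurableSet E ∧ perS n s Ω E < ⊤ ∧
    ∀ F : Set (Rn n), MeasurableSet F → F \ Ω = E \ Ω → perS n s Ω E ≤ perS n s Ω F

/-- The enlarged set `Ω_t := {y : dist(y, Ω) < t}`. -/
def nbhd {n : ℕ} (Ω : Set (Rn n)) (t : ℝ) : Set (Rn n) :=
  {y | Metric.infDist y Ω < t}

/-- The energy functional `𝒢(u, Ω)` (as an extended real). -/
def calG (n : ℕ) (s : ℝ) (Ω : Set (Rn n)) (u : Rn n → ℝ) : ℝ≥0∞ :=
  (1 / 2 : ℝ≥0∞) * ∫⁻ p in QQ Ω,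
    ENNReal.ofReal (|u p.1 - u p.2| / dist p.1 p.2 ^ ((n : ℝ) + s))

open Classical in
/-- `ũ`: equal to `u` on `𝒞Ω` and to `0` on `Ω`. -/
def tildeF {n : ℕ} (Ω : Set (Rn n)) (u : Rn n → ℝ) : Rn n → ℝ :=
  fun x => if x ∈ Ω then 0 else u x

/-- The renormalised energy functional `𝒢̃(u, Ω)`. -/
def calGt (n : ℕ) (s : ℝ) (Ω : Set (Rn n)) (u : Rn n → ℝ) : ℝ :=
  (1 / 2 : ℝ) * ∫ p in QQ Ω,
    (|u p.1 - u p.2| - |tildeF Ω u p.1 - tildeF Ω u p.2|) / dist p.1 p.2 ^ ((n : ℝ) + s)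

/-- The global tail `𝒯_s(u, Ω)` (as an extended real). -/
def tailS (n : ℕ) (s : ℝ) (Ω : Set (Rn n)) (u : Rn n → ℝ) : ℝ≥0∞ :=
  ∫⁻ x in Ω, ∫⁻ y in Ωᶜ, ENNReal.ofReal (|u y| / dist x y ^ ((n : ℝ) + s))

/-- The local tail `∫_A |φ(y)|/|x−y|^{n+s} dy`, integrated over `x ∈ Ω`. -/
def tailInt (n : ℕ) (s : ℝ) (Ω A : Set (Rn n)) (φ : Rn n → ℝ) : ℝ≥0∞ :=
  ∫⁻ x in Ω, ∫⁻ y in A, ENNReal.ofReal (|φ y| / dist x y ^ ((n : ℝ) + s))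

/-! The coarea formula writes `𝒢(u, Ω)` as `∫ Per_s({u > t}, Ω) dt`. For `t ∈ (0, 1)` the
superlevel set `{u > t}` coincides with `E₀ = E \ Ω` outside `Ω`, so it competes with `E` and
`Per_s(E, Ω) ≤ Per_s({u > t}, Ω)`; integrating over `t ∈ (0, 1)` bounds
`𝒢(χ_E, Ω) = Per_s(E, Ω)` by `𝒢(u, Ω)`. -/

lemma lintegral_abs_ite_lt_sub_ite_lt_div (a b c : ℝ) (hc : 0 ≤ c) :
    ∫⁻ t : ℝ, ENNReal.ofReal (|(if t < a then (1 : ℝ) else 0) - (if t < b then 1 else 0)| / c)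
      = ENNReal.ofReal (|a - b| / c) := by
  have h_indicator : ∀ t : ℝ,
      ENNReal.ofReal |(if t < a then (1 : ℝ) else 0) - (if t < b then 1 else 0)|
        = (Ico (min a b) (max a b)).indicator 1 t := by
    intro t
    by_cases ha : t < a <;> by_cases hb : t < b <;> simp [ha, hb, not_lt.mp]
  simp_rw [div_eq_mul_inv, ENNReal.ofReal_mul' (inv_nonneg.mpr hc)]
  rw [lintegral_mul_const' _ _ ENNReal.ofReal_ne_top]
  simp_rw [h_indicator]
  rw [lintegral_indicator_one measurableSet_Ico, Real.volume_Ico, max_sub_min_eq_abs,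
    abs_sub_comm]

/-- Coarea formula for a nonlocal energy: `|u x - u y|` is the length of the set of levels `t`
separating `u x` from `u y`. -/
theorem lintegral_abs_sub_div_eq_lintegral_superlevel {X : Type*} [MeasurableSpace X]
    {μ : Measure (X × X)} [SFinite μ] {u : X → ℝ} (hu : Measurable u)
    {k : X × X → ℝ} (hk : Measurable k) (hk_nonneg : ∀ p, 0 ≤ k p) :
    ∫⁻ p, ENNReal.ofReal (|u p.1 - u p.2| / k p) ∂μ =
      ∫⁻ t, ∫⁻ p, ENNReal.ofReal (|{x | t < u x}.indicator (fun _ => (1 : ℝ)) p.1 -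
        {x | t < u x}.indicator (fun _ => 1) p.2| / k p) ∂μ := by
  simp only [indicator_apply, mem_ofPred_eq]
  rw [← lintegral_lintegral_swap]
  · exact lintegral_congr fun p =>
      (lintegral_abs_ite_lt_sub_ite_lt_div _ _ _ (hk_nonneg p)).symm
  have h_step : ∀ v : X × X → ℝ, Measurable v → Measurable fun z : (X × X) × ℝ =>
      if z.2 < v z.1 then (1 : ℝ) else 0 := fun v hv =>
    Measurable.ite (measurableSet_lt measurable_snd (hv.comp measurable_fst))
      measurable_const measurable_const
  exact (((h_step _ (hu.comp measurable_fst)).sub (h_step _ (hu.comp measurable_snd))).abs.div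
    (hk.comp measurable_fst)).ennreal_ofReal.aemeasurable

theorem calG_eq_lintegral_perS_superlevel (n : ℕ) (s : ℝ) (Ω : Set (Rn n)) {u : Rn n → ℝ}
    (hu : Measurable u) : calG n s Ω u = ∫⁻ t, perS n s Ω {x | t < u x} := by
  unfold calG perS
  rw [lintegral_abs_sub_div_eq_lintegral_superlevel hu (by fun_prop)
    (fun _ => Real.rpow_nonneg dist_nonneg _), lintegral_const_mul' _ _ (by simp)]
  rfl

lemma superlevel_diff_eq_of_eqOn_chi {n : ℕ} {Ω E₀ : Set (Rn n)} (hE₀ : E₀ ⊆ Ωᶜ)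
    {u : Rn n → ℝ} (hu : EqOn u (chi E₀) Ωᶜ) {t : ℝ} (ht : t ∈ Ioo (0 : ℝ) 1) :
    {x | t < u x} \ Ω = E₀ := by
  ext x
  by_cases hxΩ : x ∈ Ω
  · simpa [hxΩ] using fun h => hE₀ h hxΩ
  · by_cases hx : x ∈ E₀ <;> simp [hxΩ, hx, hu hxΩ, chi, ht.1.le, ht.2]

theorem indicator_of_minimal_set_minimises_calG_general
    (n : ℕ) (s : ℝ)
    (Ω : Set (Rn n))
    (E₀ E : Set (Rn n)) (hE₀ : E₀ ⊆ Ωᶜ)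
    (hE : IsMinimalSet n s Ω E) (hEdat : E \ Ω = E₀) :
    ∀ u ∈ WsSpace n s Ω, Set.EqOn u (chi E₀) Ωᶜ →
      calG n s Ω (chi E) ≤ calG n s Ω u := by
  rintro u ⟨hu_meas, -, -⟩ hu_ext
  obtain ⟨-, -, hE_min⟩ := hE
  have h_level : ∀ t ∈ Ioo (0 : ℝ) 1, perS n s Ω E ≤ perS n s Ω {x | t < u x} := fun t ht =>
    hE_min _ (measurableSet_lt measurable_const hu_meas)
      (by rw [superlevel_diff_eq_of_eqOn_chi hE₀ hu_ext ht, hEdat])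
  calc calG n s Ω (chi E) = ∫⁻ _ in Ioo (0 : ℝ) 1, perS n s Ω E := by
        rw [setLIntegral_const, Real.volume_Ioo, sub_zero, ENNReal.ofReal_one, mul_one]; rfl
    _ ≤ ∫⁻ t in Ioo (0 : ℝ) 1, perS n s Ω {x | t < u x} :=
        setLIntegral_mono' measurableSet_Ioo h_level
    _ ≤ ∫⁻ t, perS n s Ω {x | t < u x} := setLIntegral_le_lintegral _ _
    _ = calG n s Ω u := (calG_eq_lintegral_perS_superlevel n s Ω hu_meas).symm

theorem indicator_of_minimal_set_minimises_calG
    (n : ℕ) (hn : 1 ≤ n) (s : ℝ) (hs : s ∈ Set.Ioo (0 : ℝ) 1)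
    (Ω : Set (Rn n)) (hΩo : IsOpen Ω) (hΩb : Bornology.IsBounded Ω)
    (hΩl : HasLipschitzBoundary Ω)
    (E₀ E : Set (Rn n)) (hE₀ : E₀ ⊆ Ωᶜ)
    (hE : IsMinimalSet n s Ω E) (hEdat : E \ Ω = E₀) :
    ∀ u ∈ WsSpace n s Ω, Set.EqOn u (chi E₀) Ωᶜ →
      calG n s Ω (chi E) ≤ calG n s Ω u :=
  indicator_of_minimal_set_minimises_calG_general n s Ω E₀ E hE₀ hE hEdat
end
end

section
/- Let u ∈ 𝒲^s(Ω) be an s-minimal function in Ω. Then for every λ ∈ ℝ and every ε > 0, the function φ_{λ,ε}(x) := ε⁻¹ · min{ ε, max{ u(x) − λ + √ε, 0 } } is an s-minimal function in Ω. -/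
open MeasureTheory Set Filter Metric ENNReal

noncomputable section
set_option maxHeartbeats 1000000

/-!
Write `f t = min ε (max (t - λ + √ε) 0)`, so that `φ_{λ,ε} = ε⁻¹ (f ∘ u)`. Minimality is
invariant under multiplication by a positive constant, and it survives composition with any
bounded, nondecreasing, `1`-Lipschitz `f`. Indeed, given a competitor `v` of `f ∘ u`, truncate
it to the range of `f` (call the result `T v`) and graft it onto `u`: `w = u - f ∘ u + T v` is a
competitor of `u`. Since `f` and `id - f` are both monotone,
`|u x - u y| = |f (u x) - f (u y)| + |(u - f ∘ u) x - (u - f ∘ u) y|`, so comparing `u` with `w`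
gains at least as much as comparing `f ∘ u` with `T v`, which gains at least as much as
comparing `f ∘ u` with `v`.

The energies are Bochner integrals over `Q(Ω)`, so the comparison of `u` with `w` has to be
shown integrable. Off `Ω × Ω` its integrand is `O(|x - y|^{-n-s})`, and
`∫_Ω ∫_{𝒞Ω} |x - y|^{-n-s} < ∞` for a bounded Lipschitz domain and `s < 1`: the inner
integral is `O(dist(x, 𝒞Ω)^{-s})`, and near the boundary `dist(x, 𝒞Ω)` is comparable to the
height of `x` above a Lipschitz graph, whose sublevel sets are slabs of linearly small measure.
-/

section MonotoneLipschitz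

variable {f : ℝ → ℝ}

theorem abs_sub_eq_abs_map_sub_add (hf : Monotone f) (hf1 : LipschitzWith 1 f) (a b : ℝ) :
    |a - b| = |f a - f b| + |(a - f a) - (b - f b)| := by
  have key : ∀ {a b : ℝ}, b ≤ a → |a - b| = |f a - f b| + |(a - f a) - (b - f b)| := by
    intro a b hba
    have hlip : f a - f b ≤ a - b := by
      simpa [Real.dist_eq, abs_of_nonneg (sub_nonneg.2 (hf hba)),
        abs_of_nonneg (sub_nonneg.2 hba)] using hf1.dist_le_mul a b
    rw [abs_of_nonneg (sub_nonneg.2 hba), abs_of_nonneg (sub_nonneg.2 (hf hba)),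
      abs_of_nonneg (by linarith)]
    ring
  rcases le_total b a with hba | hab
  · exact key hba
  · rw [abs_sub_comm, key hab, abs_sub_comm (f a), abs_sub_comm (a - f a)]

theorem abs_map_sub_sub_abs_le (hf : Monotone f) (hf1 : LipschitzWith 1 f) (a b p q : ℝ) :
    |f a - f b| - |p - q| ≤ |a - b| - |(a - f a + p) - (b - f b + q)| := by
  have htri : |(a - f a + p) - (b - f b + q)| ≤ |(a - f a) - (b - f b)| + |p - q| := by
    rw [show (a - f a + p) - (b - f b + q) = ((a - f a) - (b - f b)) + (p - q) by ring]
    exact abs_add_le _ _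
  linarith [abs_sub_eq_abs_map_sub_add hf hf1 a b]

end MonotoneLipschitz

theorem monotone_min_max (a b : ℝ) : Monotone fun t : ℝ => min b (max t a) :=
  fun _ _ h => min_le_min_left _ (max_le_max_right _ h)

theorem lipschitzWith_min_max (a b : ℝ) : LipschitzWith 1 fun t : ℝ => min b (max t a) :=
  (LipschitzWith.id.max_const a).const_min b

theorem integrableOn_prod_of_lintegral_lt_top {α : Type*} [MeasureSpace α]
    [SFinite (volume : Measure α)] {F : α × α → ℝ} (hF : Measurable F) (hF0 : ∀ p, 0 ≤ F p)
    {A B : Set α} (h : ∫⁻ x in A, ∫⁻ y in B, ENNReal.ofReal (F (x, y)) < ⊤) :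
    IntegrableOn F (A ×ˢ B) := by
  refine ⟨hF.aestronglyMeasurable, (hasFiniteIntegral_iff_ofReal (ae_of_all _ hF0)).2 ?_⟩
  rwa [Measure.volume_eq_prod, ← Measure.prod_restrict,
    lintegral_prod _ hF.ennreal_ofReal.aemeasurable]

theorem integrableOn_prod_swap_of_comp_swap {α : Type*} [MeasureSpace α]
    [SFinite (volume : Measure α)] {F : α × α → ℝ} (hF : ∀ p, F p.swap = F p) {A B : Set α}
    (h : IntegrableOn F (A ×ˢ B)) : IntegrableOn F (B ×ˢ A) := by
  rw [IntegrableOn, Measure.volume_eq_prod, ← Measure.prod_restrict] at h ⊢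
  simpa [Function.comp_def, hF] using h.swap

section Gagliardo

variable {n : ℕ} {s : ℝ} {Ω : Set (Rn n)} {f g h : Rn n → ℝ}

theorem gagliardo_mono (hfg : ∀ x y, |f x - f y| ≤ |g x - g y|) :
    gagliardo n s Ω f ≤ gagliardo n s Ω g :=
  lintegral_mono fun x => lintegral_mono fun y =>
    ENNReal.ofReal_le_ofReal (div_le_div_of_nonneg_right (hfg x y) (by positivity))

theorem gagliardo_const_mul (c : ℝ) :
    gagliardo n s Ω (fun x => c * f x) = ENNReal.ofReal |c| * gagliardo n s Ω f := by
  simp only [gagliardo, ← mul_sub, abs_mul, mul_div_assoc,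
    ENNReal.ofReal_mul (abs_nonneg c)]
  rw [← lintegral_const_mul' _ _ ENNReal.ofReal_ne_top]
  exact lintegral_congr fun x => lintegral_const_mul' _ _ ENNReal.ofReal_ne_top

theorem measurable_gagliardo_integrand (hf : Measurable f) :
    Measurable fun p : Rn n × Rn n => |f p.1 - f p.2| / dist p.1 p.2 ^ ((n : ℝ) + s) :=
  ((hf.comp measurable_fst).sub (hf.comp measurable_snd)).abs.div
    ((measurable_fst.dist measurable_snd).pow_const _)

theorem gagliardo_le_add (hg : Measurable g)
    (hfgh : ∀ x y, |f x - f y| ≤ |g x - g y| + |h x - h y|) :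
    gagliardo n s Ω f ≤ gagliardo n s Ω g + gagliardo n s Ω h := by
  have hgm := (measurable_gagliardo_integrand (s := s) hg).ennreal_ofReal
  calc gagliardo n s Ω f
      ≤ ∫⁻ x in Ω, ∫⁻ y in Ω,
          (ENNReal.ofReal (|g x - g y| / dist x y ^ ((n : ℝ) + s)) +
            ENNReal.ofReal (|h x - h y| / dist x y ^ ((n : ℝ) + s))) :=
        lintegral_mono fun x => lintegral_mono fun y => by
          rw [← ENNReal.ofReal_add (by positivity) (by positivity), ← add_div]
          exact ENNReal.ofReal_le_ofReal
            (div_le_div_of_nonneg_right (hfgh x y) (by positivity))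
    _ = gagliardo n s Ω g + gagliardo n s Ω h := by
        rw [gagliardo, gagliardo, ← lintegral_add_left hgm.lintegral_prod_right']
        exact lintegral_congr fun x => lintegral_add_left (hgm.comp measurable_prodMk_left) _

theorem integrableOn_gagliardo_integrand (hf : Measurable f) (hgag : gagliardo n s Ω f < ⊤) :
    IntegrableOn (fun p : Rn n × Rn n => |f p.1 - f p.2| / dist p.1 p.2 ^ ((n : ℝ) + s))
      (Ω ×ˢ Ω) :=
  integrableOn_prod_of_lintegral_lt_top (measurable_gagliardo_integrand hf)
    (fun p => by positivity) hgag

end Gagliardo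

section QQ

variable {n : ℕ} {s : ℝ} {Ω : Set (Rn n)}

theorem QQ_eq_union (Ω : Set (Rn n)) :
    QQ Ω = Ω ×ˢ Ω ∪ (Ω ×ˢ Ωᶜ ∪ Ωᶜ ×ˢ Ω) := by
  ext p
  simp only [QQ, mem_compl_iff, mem_prod, mem_union, not_and_or]
  tauto

theorem integrableOn_inv_dist_rpow
    (hK : ∫⁻ x in Ω, ∫⁻ y in Ωᶜ, ENNReal.ofReal ((dist x y ^ ((n : ℝ) + s))⁻¹) < ⊤) :
    IntegrableOn (fun p : Rn n × Rn n => (dist p.1 p.2 ^ ((n : ℝ) + s))⁻¹) (Ω ×ˢ Ωᶜ) :=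
  integrableOn_prod_of_lintegral_lt_top
    ((measurable_fst.dist measurable_snd).pow_const _).inv
    (fun _ => inv_nonneg.2 (by positivity)) hK

/-- On `Ω × 𝒞Ω` the two differences share the point `y ∈ 𝒞Ω`, where `f = g`, so the
integrand is at most `|f x - g x| ≤ M` over the kernel. -/
theorem integrableOn_QQ_abs_sub_sub_abs_sub
    (hK : ∫⁻ x in Ω, ∫⁻ y in Ωᶜ, ENNReal.ofReal ((dist x y ^ ((n : ℝ) + s))⁻¹) < ⊤)
    {f g : Rn n → ℝ} (hf : Measurable f) (hfgag : gagliardo n s Ω f < ⊤)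
    (hg : Measurable g) (hggag : gagliardo n s Ω g < ⊤)
    (hfg : ∀ᵐ x ∂(volume.restrict Ωᶜ), f x = g x) {M : ℝ} (hM : ∀ x, |f x - g x| ≤ M) :
    IntegrableOn (fun p : Rn n × Rn n =>
      (|f p.1 - f p.2| - |g p.1 - g p.2|) / dist p.1 p.2 ^ ((n : ℝ) + s)) (QQ Ω) := by
  set F := fun p : Rn n × Rn n =>
    (|f p.1 - f p.2| - |g p.1 - g p.2|) / dist p.1 p.2 ^ ((n : ℝ) + s)
  have hFm : AEStronglyMeasurable F :=
    ((measurable_gagliardo_integrand hf).sub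
      (measurable_gagliardo_integrand hg)).aestronglyMeasurable.congr
        (ae_of_all _ fun p => (sub_div _ _ _).symm)
  have hK0 : ∀ p : Rn n × Rn n, 0 ≤ dist p.1 p.2 ^ ((n : ℝ) + s) := fun p => by positivity
  have hdiag : IntegrableOn F (Ω ×ˢ Ω) := by
    refine ((integrableOn_gagliardo_integrand hf hfgag).add
      (integrableOn_gagliardo_integrand hg hggag)).mono' hFm.restrict (ae_of_all _ fun p => ?_)
    simp only [F, Pi.add_apply, Real.norm_eq_abs, abs_div, abs_of_nonneg (hK0 p), ← add_div]
    gcongr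
    simpa only [abs_abs] using abs_sub |f p.1 - f p.2| |g p.1 - g p.2|
  have hoff : IntegrableOn F (Ω ×ˢ Ωᶜ) := by
    refine ((integrableOn_inv_dist_rpow hK).const_mul M).mono' hFm.restrict ?_
    have hsnd : ∀ᵐ p ∂(volume.restrict (Ω ×ˢ Ωᶜ)), f p.2 = g p.2 := by
      rw [Measure.volume_eq_prod, ← Measure.prod_restrict]
      exact Measure.quasiMeasurePreserving_snd.ae hfg
    filter_upwards [hsnd] with p hp
    simp only [F, Real.norm_eq_abs, abs_div, abs_of_nonneg (hK0 p), ← div_eq_mul_inv]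
    gcongr
    calc |(|f p.1 - f p.2| - |g p.1 - g p.2|)| ≤ |(f p.1 - f p.2) - (g p.1 - g p.2)| :=
          abs_abs_sub_abs_le_abs_sub _ _
      _ = |f p.1 - g p.1| := by rw [hp]; ring_nf
      _ ≤ M := hM p.1
  have hswap : ∀ p, F p.swap = F p := fun p => by
    simp only [F, Prod.fst_swap, Prod.snd_swap, dist_comm p.2, abs_sub_comm (f p.2),
      abs_sub_comm (g p.2)]
  rw [QQ_eq_union]
  exact hdiag.union (hoff.union (integrableOn_prod_swap_of_comp_swap hswap hoff))

end QQ

section Minimal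

variable {n : ℕ} {s : ℝ} {Ω : Set (Rn n)} {u : Rn n → ℝ}

theorem const_mul_mem_WsSpace (hu : u ∈ WsSpace n s Ω) (c : ℝ) :
    (fun x => c * u x) ∈ WsSpace n s Ω :=
  ⟨hu.1.const_mul c, hu.2.1.const_mul c, by
    rw [gagliardo_const_mul]; exact ENNReal.mul_lt_top ENNReal.ofReal_lt_top hu.2.2⟩

theorem comp_mem_WsSpace (hΩ : volume Ω ≠ ⊤) (hu : u ∈ WsSpace n s Ω) {f : ℝ → ℝ}
    (hf : Measurable f) (hf1 : LipschitzWith 1 f) {a b : ℝ} (hfab : ∀ t, f t ∈ Icc a b) :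
    f ∘ u ∈ WsSpace n s Ω := by
  refine ⟨hf.comp hu.1, Measure.integrableOn_of_bounded hΩ (hf.comp hu.1).aestronglyMeasurable
    (M := max |a| |b|) (ae_of_all _ fun x => abs_le_max_abs_abs (hfab _).1 (hfab _).2), ?_⟩
  refine (gagliardo_mono fun x y => ?_).trans_lt hu.2.2
  simpa [Real.dist_eq] using hf1.dist_le_mul (u x) (u y)

theorem IsMinimalFn.const_mul (hu : IsMinimalFn n s Ω u) {c : ℝ} (hc : 0 < c) :
    IsMinimalFn n s Ω fun x => c * u x := by
  refine ⟨const_mul_mem_WsSpace hu.1 c, fun v hv hvu => ?_⟩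
  have hcomp := hu.2 (fun x => c⁻¹ * v x) (const_mul_mem_WsSpace hv c⁻¹) (by
    filter_upwards [hvu] with x hx
    rw [hx, inv_mul_cancel_left₀ hc.ne'])
  have hscale : ∀ p : Rn n × Rn n,
      (|c * u p.1 - c * u p.2| - |v p.1 - v p.2|) / dist p.1 p.2 ^ ((n : ℝ) + s) =
        c * ((|u p.1 - u p.2| - |c⁻¹ * v p.1 - c⁻¹ * v p.2|) / dist p.1 p.2 ^ ((n : ℝ) + s)) := by
    intro p
    rw [← mul_sub, ← mul_sub, abs_mul, abs_mul, abs_of_pos hc, abs_of_pos (inv_pos.2 hc)]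
    field_simp
  simp_rw [hscale, integral_const_mul]
  exact mul_nonpos_of_nonneg_of_nonpos hc.le hcomp

theorem IsMinimalFn.comp
    (hK : ∫⁻ x in Ω, ∫⁻ y in Ωᶜ, ENNReal.ofReal ((dist x y ^ ((n : ℝ) + s))⁻¹) < ⊤)
    (hΩ : volume Ω ≠ ⊤) (hu : IsMinimalFn n s Ω u) {f : ℝ → ℝ} (hf : Monotone f)
    (hf1 : LipschitzWith 1 f) {a b : ℝ} (hfab : ∀ t, f t ∈ Icc a b) :
    IsMinimalFn n s Ω (f ∘ u) := by
  obtain ⟨hu, humin⟩ := hu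
  have hab : a ≤ b := (hfab 0).1.trans (hfab 0).2
  have hfu := comp_mem_WsSpace hΩ hu hf.measurable hf1 hfab
  refine ⟨hfu, fun v hv hvu => ?_⟩
  set T : ℝ → ℝ := fun t => min b (max t a)
  have hTab : ∀ t, T t ∈ Icc a b := fun t => ⟨le_min hab (le_max_right _ _), min_le_left _ _⟩
  have hT1 : ∀ p q, |T p - T q| ≤ |p - q| := fun p q => by
    simpa [Real.dist_eq] using (lipschitzWith_min_max a b).dist_le_mul p q
  have hTv := comp_mem_WsSpace hΩ hv (monotone_min_max a b).measurable
    (lipschitzWith_min_max a b) hTab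
  set w : Rn n → ℝ := fun x => u x - f (u x) + T (v x)
  have hsplit : ∀ x y, |f (u x) - f (u y)| - |T (v x) - T (v y)| ≤ |u x - u y| - |w x - w y| :=
    fun x y => abs_map_sub_sub_abs_le hf hf1 (u x) (u y) (T (v x)) (T (v y))
  have hw : w ∈ WsSpace n s Ω := by
    refine ⟨(hu.1.sub hfu.1).add hTv.1, (hu.2.1.sub hfu.2.1).add hTv.2.1, ?_⟩
    refine (gagliardo_le_add hu.1 fun x y => ?_).trans_lt (ENNReal.add_lt_top.2 ⟨hu.2.2, hv.2.2⟩)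
    linarith [hsplit x y, hT1 (v x) (v y), abs_nonneg (f (u x) - f (u y))]
  have hwu : ∀ᵐ x ∂(volume.restrict Ωᶜ), u x = w x := by
    filter_upwards [hvu] with x hx
    have hTx : T (v x) = f (u x) := by
      simp only [T, hx, Function.comp_apply, max_eq_left (hfab _).1, min_eq_right (hfab _).2]
    simp only [w, hTx, sub_add_cancel]
  have hwM : ∀ x, |u x - w x| ≤ b - a := fun x => by
    rw [show u x - w x = f (u x) - T (v x) by simp only [w]; ring, abs_le]
    constructor <;> linarith [(hfab (u x)).1, (hfab (u x)).2, (hTab (v x)).1, (hTab (v x)).2]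
  have hG := integrableOn_QQ_abs_sub_sub_abs_sub hK hu.1 hu.2.2 hw.1 hw.2.2 hwu hwM
  by_cases hF : IntegrableOn (fun p : Rn n × Rn n =>
    (|(f ∘ u) p.1 - (f ∘ u) p.2| - |v p.1 - v p.2|) / dist p.1 p.2 ^ ((n : ℝ) + s)) (QQ Ω)
  · refine (setIntegral_mono hF hG fun p => ?_).trans (humin w hw (hwu.mono fun x hx => hx.symm))
    refine div_le_div_of_nonneg_right ?_ (by positivity)
    simp only [Function.comp_apply]
    linarith [hsplit p.1 p.2, hT1 (v p.1) (v p.2)]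
  · rw [integral_undef hF]

end Minimal

theorem inv_rpow_mul_two_mul_pow {ρ : ℝ} (hρ : 0 < ρ) (d : ℕ) (s : ℝ) :
    (ρ ^ ((d : ℝ) + s))⁻¹ * (2 * ρ) ^ d = 2 ^ d * ρ ^ (-s) := by
  rw [Real.rpow_add hρ, Real.rpow_natCast, mul_pow, Real.rpow_neg hρ.le]
  have : ρ ^ d ≠ 0 := by positivity
  field_simp

theorem mul_pow_rpow {δ b : ℝ} (hδ : 0 ≤ δ) (hb : 0 ≤ b) (t : ℝ) (j : ℕ) :
    (δ * b ^ j) ^ t = δ ^ t * (b ^ t) ^ j := by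
  rw [Real.mul_rpow hδ (by positivity), ← Real.rpow_natCast, ← Real.rpow_natCast,
    ← Real.rpow_mul hb, ← Real.rpow_mul hb, mul_comm (j : ℝ)]

/-- Summing the kernel over the dyadic shells `δ 2ʲ ≤ |x - y| < δ 2ʲ⁺¹`, `δ = dist(x, A)`,
gives a geometric series of ratio `2⁻ˢ`. -/
theorem exists_lintegral_inv_dist_rpow_le {E : Type*} [NormedAddCommGroup E] [NormedSpace ℝ E]
    [MeasurableSpace E] [BorelSpace E] [FiniteDimensional ℝ E] (μ : Measure E)
    [μ.IsAddHaarMeasure] {s : ℝ} (hs : 0 < s) :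
    ∃ C : ℝ≥0∞, C ≠ ⊤ ∧ ∀ (A : Set E) (x : E), 0 < infDist x A →
      ∫⁻ y in A, ENNReal.ofReal ((dist x y ^ ((Module.finrank ℝ E : ℝ) + s))⁻¹) ∂μ ≤
        C * ENNReal.ofReal (infDist x A ^ (-s)) := by
  set d := Module.finrank ℝ E
  set V := μ (ball (0 : E) 1)
  set q := ENNReal.ofReal ((2 : ℝ) ^ (-s))
  have hq : q < 1 := by
    rw [← ENNReal.ofReal_one]
    exact (ENNReal.ofReal_lt_ofReal_iff_of_nonneg (by positivity)).2
      (Real.rpow_lt_one_of_one_lt_of_neg one_lt_two (neg_neg_of_pos hs))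
  refine ⟨ENNReal.ofReal (2 ^ d) * V * (1 - q)⁻¹,
    ENNReal.mul_ne_top (ENNReal.mul_ne_top ENNReal.ofReal_ne_top measure_ball_lt_top.ne)
      (ENNReal.inv_ne_top.2 (tsub_pos_of_lt hq).ne'), fun A x hδ => ?_⟩
  set δ := infDist x A
  set shell : ℕ → Set E := fun j => {y | δ * 2 ^ j ≤ dist x y ∧ dist x y < δ * 2 ^ (j + 1)}
  have hcover : A ⊆ ⋃ j, shell j := fun y hy => by
    have h1 : 1 ≤ dist x y / δ := (one_le_div hδ).2 (infDist_le_dist_of_mem hy)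
    obtain ⟨j, hj, hj'⟩ := exists_nat_pow_near h1 one_lt_two
    exact mem_iUnion.2 ⟨j, (le_div_iff₀' hδ).1 hj, (div_lt_iff₀' hδ).1 hj'⟩
  have hshell : ∀ j, ∫⁻ y in shell j, ENNReal.ofReal ((dist x y ^ ((d : ℝ) + s))⁻¹) ∂μ ≤
      ENNReal.ofReal (2 ^ d * δ ^ (-s)) * V * q ^ j := fun j => by
    have hρ : 0 < δ * 2 ^ j := by positivity
    calc ∫⁻ y in shell j, ENNReal.ofReal ((dist x y ^ ((d : ℝ) + s))⁻¹) ∂μ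
        ≤ ∫⁻ _ in shell j, ENNReal.ofReal (((δ * 2 ^ j) ^ ((d : ℝ) + s))⁻¹) ∂μ :=
          setLIntegral_mono measurable_const fun y hy => ENNReal.ofReal_le_ofReal <|
            inv_anti₀ (by positivity) (Real.rpow_le_rpow hρ.le hy.1 (by positivity))
      _ ≤ ENNReal.ofReal (((δ * 2 ^ j) ^ ((d : ℝ) + s))⁻¹) * μ (ball x (2 * (δ * 2 ^ j))) := by
          rw [setLIntegral_const]
          gcongr
          intro y hy
          rw [mem_ball']
          convert hy.2 using 1
          ring
      _ = ENNReal.ofReal (2 ^ d * δ ^ (-s)) * V * q ^ j := by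
          rw [Measure.addHaar_ball_of_pos _ _ (by positivity), ← mul_assoc,
            ← ENNReal.ofReal_mul (by positivity), inv_rpow_mul_two_mul_pow hρ,
            mul_pow_rpow hδ.le zero_le_two, ← ENNReal.ofReal_pow (by positivity),
            ← mul_assoc, ENNReal.ofReal_mul (by positivity)]
          ring
  calc ∫⁻ y in A, ENNReal.ofReal ((dist x y ^ ((d : ℝ) + s))⁻¹) ∂μ
      ≤ ∫⁻ y in ⋃ j, shell j, ENNReal.ofReal ((dist x y ^ ((d : ℝ) + s))⁻¹) ∂μ :=
        lintegral_mono_set hcover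
    _ ≤ ∑' j, ∫⁻ y in shell j, ENNReal.ofReal ((dist x y ^ ((d : ℝ) + s))⁻¹) ∂μ :=
        lintegral_iUnion_le _ _
    _ ≤ ∑' j, ENNReal.ofReal (2 ^ d * δ ^ (-s)) * V * q ^ j := ENNReal.tsum_le_tsum hshell
    _ = ENNReal.ofReal (2 ^ d) * V * (1 - q)⁻¹ * ENNReal.ofReal (δ ^ (-s)) := by
        rw [ENNReal.tsum_mul_left, ENNReal.tsum_geometric,
          ENNReal.ofReal_mul (by positivity)]
        ring

section GraphHeight

variable {E : Type*} [NormedAddCommGroup E] [InnerProductSpace ℝ E] {ν : E}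

/-- `Ω` is `{graphHeight ψ ν > 0}` in the charts of `HasLipschitzBoundary`. -/
def graphHeight (ψ : E → ℝ) (ν y : E) : ℝ := inner ℝ y ν - ψ (y - inner ℝ y ν • ν)

theorem graphHeight_add_smul (hν : ‖ν‖ = 1) (ψ : E → ℝ) (y : E) (c : ℝ) :
    graphHeight ψ ν (y + c • ν) = graphHeight ψ ν y + c := by
  have hνν : inner ℝ ν ν = (1 : ℝ) := by rw [real_inner_self_eq_norm_mul_norm, hν, mul_one]
  have hinner : inner ℝ (y + c • ν) ν = inner ℝ y ν + c := by
    rw [inner_add_left, real_inner_smul_left, hνν, mul_one]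
  simp only [graphHeight, hinner, add_smul]
  rw [show y + c • ν - (inner ℝ y ν • ν + c • ν) = y - inner ℝ y ν • ν by abel]
  ring

theorem norm_sub_inner_smul_le (hν : ‖ν‖ = 1) (w : E) : ‖w - inner ℝ w ν • ν‖ ≤ ‖w‖ := by
  have h : ‖w - inner ℝ w ν • ν‖ ^ 2 = ‖w‖ ^ 2 - inner ℝ w ν ^ 2 := by
    rw [norm_sub_sq_real, real_inner_smul_right, norm_smul, hν, Real.norm_eq_abs, mul_one,
      sq_abs]
    ring
  have h2 : ‖w - inner ℝ w ν • ν‖ ^ 2 ≤ ‖w‖ ^ 2 := by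
    rw [h]; nlinarith [sq_nonneg (inner ℝ w ν)]
  exact (pow_le_pow_iff_left₀ (norm_nonneg _) (norm_nonneg _) two_ne_zero).1 h2

theorem lipschitzWith_graphHeight (hν : ‖ν‖ = 1) {L : NNReal} {ψ : E → ℝ}
    (hψ : LipschitzWith L ψ) : LipschitzWith (1 + L) (graphHeight ψ ν) := by
  have hinner : LipschitzWith 1 fun y : E => inner ℝ y ν :=
    LipschitzWith.of_dist_le_mul fun y₁ y₂ => by
      rw [Real.dist_eq, ← inner_sub_left, dist_eq_norm, NNReal.coe_one, one_mul]
      simpa [hν] using abs_real_inner_le_norm (y₁ - y₂) ν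
  have hproj : LipschitzWith 1 fun y : E => y - inner ℝ y ν • ν :=
    LipschitzWith.of_dist_le_mul fun y₁ y₂ => by
      rw [dist_eq_norm, dist_eq_norm, NNReal.coe_one, one_mul,
        show y₁ - inner ℝ y₁ ν • ν - (y₂ - inner ℝ y₂ ν • ν) =
          (y₁ - y₂) - inner ℝ (y₁ - y₂) ν • ν by rw [inner_sub_left, sub_smul]; abel]
      exact norm_sub_inner_smul_le hν _
  have h := hinner.sub (hψ.comp hproj)
  rw [mul_one] at h
  exact h

end GraphHeight

section Slab

variable {E : Type*} [NormedAddCommGroup E] [NormedSpace ℝ E] [MeasurableSpace E] [BorelSpace E]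
  {μ : Measure E} [μ.IsAddRightInvariant] {Δ : E → ℝ} {ν : E}

/-- The translates of the slab by `-k h ν`, `k < m`, are disjoint slabs inside `ball z (R + 1)`. -/
theorem nat_mul_measure_slab_le (hΔ : Continuous Δ) (hν : ‖ν‖ = 1)
    (hΔν : ∀ y (c : ℝ), Δ (y + c • ν) = Δ y + c) (z : E) (R a : ℝ) {h : ℝ} (hh : 0 ≤ h)
    {m : ℕ} (hm : m * h ≤ 1) :
    m * μ {y ∈ ball z R | Δ y ∈ Ioc a (a + h)} ≤ μ (ball z (R + 1)) := by
  set T := {y ∈ ball z R | Δ y ∈ Ioc a (a + h)}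
  have hT : MeasurableSet T := measurableSet_ball.inter (hΔ.measurable measurableSet_Ioc)
  set S : ℕ → Set E := fun k => (· + (-((k : ℝ) * h)) • ν) ⁻¹' T
  have hS : ∀ k, MeasurableSet (S k) := fun k => measurable_add_const _ hT
  have hSΔ : ∀ k y, y ∈ S k → Δ y ∈ Ioc (a + k * h) (a + (k + 1) * h) := fun k y hy => by
    have h' := hy.2
    rw [hΔν] at h'
    constructor <;> linarith [h'.1, h'.2]
  have hSball : ∀ k < m, S k ⊆ ball z (R + 1) := fun k hk y hy => by
    have hkh : (k : ℝ) * h ≤ 1 := le_trans (by gcongr) hm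
    have hd : dist y (y + (-((k : ℝ) * h)) • ν) = k * h := by
      rw [dist_eq_norm, sub_add_cancel_left, norm_neg, norm_smul, hν, mul_one, norm_neg,
        Real.norm_eq_abs, abs_of_nonneg (by positivity)]
    rw [mem_ball]
    calc dist y z ≤ dist y (y + (-((k : ℝ) * h)) • ν) + dist (y + (-((k : ℝ) * h)) • ν) z :=
          dist_triangle _ _ _
      _ < R + 1 := by rw [hd]; linarith [mem_ball.1 hy.1]
  have hlt : ∀ i j, i < j → Disjoint (S i) (S j) := fun i j hij =>
    Set.disjoint_left.2 fun y hi hj => by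
      have hij' : (i : ℝ) + 1 ≤ j := by exact_mod_cast hij
      nlinarith [(hSΔ i y hi).2, (hSΔ j y hj).1]
  have hdisj : (↑(Finset.range m) : Set ℕ).PairwiseDisjoint S := fun i _ j _ hij =>
    (lt_or_gt_of_ne hij).elim (hlt i j) fun h => (hlt j i h).symm
  calc m * μ T = ∑ k ∈ Finset.range m, μ (S k) := by
        simp [S, measure_preimage_add_right]
    _ = μ (⋃ k ∈ Finset.range m, S k) := (measure_biUnion_finset hdisj fun k _ => hS k).symm
    _ ≤ μ (ball z (R + 1)) :=
        measure_mono (iUnion₂_subset fun k hk => hSball k (Finset.mem_range.1 hk))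

theorem measure_slab_le (hΔ : Continuous Δ) (hν : ‖ν‖ = 1)
    (hΔν : ∀ y (c : ℝ), Δ (y + c • ν) = Δ y + c) (z : E) (R a : ℝ) {h : ℝ} (hh : 0 < h) :
    μ {y ∈ ball z R | Δ y ∈ Ioc a (a + h)} ≤ ENNReal.ofReal (2 * h) * μ (ball z (R + 1)) := by
  set T := {y ∈ ball z R | Δ y ∈ Ioc a (a + h)}
  rcases le_or_gt h 2⁻¹ with hh2 | hh2
  · set m := ⌊1 / h⌋₊
    have hmh : (m : ℝ) * h ≤ 1 := by
      have := Nat.floor_le (one_div_pos.2 hh).le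
      calc (m : ℝ) * h ≤ 1 / h * h := by gcongr
        _ = 1 := one_div_mul_cancel hh.ne'
    have hm : 1 / (2 * h) ≤ m := by
      have h1 := Nat.lt_floor_add_one (1 / h)
      have h2 : 1 / (2 * h) + 1 ≤ 1 / h := by
        rw [div_add_one (by positivity), div_le_div_iff₀ (by positivity) hh]
        nlinarith
      linarith
    calc μ T = ENNReal.ofReal (2 * h) * (ENNReal.ofReal (1 / (2 * h)) * μ T) := by
          rw [← mul_assoc, ← ENNReal.ofReal_mul (by positivity), mul_one_div_cancel (by positivity),
            ENNReal.ofReal_one, one_mul]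
      _ ≤ ENNReal.ofReal (2 * h) * (m * μ T) := by
          gcongr
          rw [← ENNReal.ofReal_natCast]
          exact ENNReal.ofReal_le_ofReal hm
      _ ≤ ENNReal.ofReal (2 * h) * μ (ball z (R + 1)) := by
          gcongr
          exact nat_mul_measure_slab_le hΔ hν hΔν z R a hh.le hmh
  · calc μ T ≤ μ (ball z (R + 1)) := measure_mono fun y hy => ball_subset_ball (by linarith) hy.1
      _ ≤ ENNReal.ofReal (2 * h) * μ (ball z (R + 1)) := by
          refine le_mul_of_one_le_left zero_le ?_
          rw [← ENNReal.ofReal_one]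
          exact ENNReal.ofReal_le_ofReal (by linarith)

end Slab

/-- Sum over the dyadic layers `C 2⁻ʲ⁻¹ < f ≤ C 2⁻ʲ`: the `j`-th one contributes
`O(2^{-(1-s)j})`. -/
theorem setLIntegral_rpow_neg_lt_top_of_measure_le {α : Type*} [MeasurableSpace α]
    {μ : Measure α} {S : Set α} {f : α → ℝ} {C : ℝ} (hfC : ∀ x ∈ S, 0 < f x ∧ f x ≤ C)
    {K : ℝ≥0∞} (hK : K ≠ ⊤) (hμ : ∀ h, 0 < h → μ {x ∈ S | f x ≤ h} ≤ K * ENNReal.ofReal h)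
    {s : ℝ} (hs0 : 0 ≤ s) (hs1 : s < 1) :
    ∫⁻ x in S, ENNReal.ofReal (f x ^ (-s)) ∂μ < ⊤ := by
  rcases S.eq_empty_or_nonempty with rfl | ⟨x₀, hx₀⟩
  · simp
  have hC : 0 < C := (hfC x₀ hx₀).1.trans_le (hfC x₀ hx₀).2
  set layer : ℕ → Set α := fun j => {x ∈ S | C * 2⁻¹ ^ (j + 1) < f x ∧ f x ≤ C * 2⁻¹ ^ j}
  have hcover : S ⊆ ⋃ j, layer j := fun x hx => by
    obtain ⟨j, hj, hj'⟩ := exists_nat_pow_near_of_lt_one (div_pos (hfC x hx).1 hC)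
      ((div_le_one hC).2 (hfC x hx).2) (by norm_num : (0 : ℝ) < 2⁻¹) (by norm_num)
    exact mem_iUnion.2 ⟨j, hx, (lt_div_iff₀' hC).1 hj, (div_le_iff₀' hC).1 hj'⟩
  set q := ENNReal.ofReal ((2⁻¹ : ℝ) ^ (1 - s))
  have hq : q < 1 := by
    rw [← ENNReal.ofReal_one]
    exact (ENNReal.ofReal_lt_ofReal_iff_of_nonneg (by positivity)).2
      (Real.rpow_lt_one (by norm_num) (by norm_num) (by linarith))
  set c := K * ENNReal.ofReal (2 ^ s * C ^ (1 - s))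
  have hlayer : ∀ j, ∫⁻ x in layer j, ENNReal.ofReal (f x ^ (-s)) ∂μ ≤ c * q ^ j := fun j => by
    set ρ := C * 2⁻¹ ^ j
    have hρ : 0 < ρ := by positivity
    have hρ' : C * 2⁻¹ ^ (j + 1) = ρ * 2⁻¹ := by rw [pow_succ, mul_assoc]
    calc ∫⁻ x in layer j, ENNReal.ofReal (f x ^ (-s)) ∂μ
        ≤ ∫⁻ _ in layer j, ENNReal.ofReal ((ρ * 2⁻¹) ^ (-s)) ∂μ :=
          setLIntegral_mono measurable_const fun x hx => ENNReal.ofReal_le_ofReal <|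
            Real.rpow_le_rpow_of_nonpos (by positivity) (hρ' ▸ hx.2.1.le) (by linarith)
      _ ≤ ENNReal.ofReal ((ρ * 2⁻¹) ^ (-s)) * (K * ENNReal.ofReal ρ) := by
          rw [setLIntegral_const]
          gcongr
          exact (measure_mono (show layer j ⊆ {x ∈ S | f x ≤ ρ} from
            fun x hx => ⟨hx.1, hx.2.2⟩)).trans (hμ ρ hρ)
      _ = c * q ^ j := by
          have : (ρ * 2⁻¹) ^ (-s) * ρ = 2 ^ s * C ^ (1 - s) * ((2⁻¹ : ℝ) ^ (1 - s)) ^ j := by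
            rw [Real.mul_rpow hρ.le (by norm_num), Real.inv_rpow zero_le_two, Real.rpow_neg
              zero_le_two, inv_inv, mul_comm (ρ ^ (-s)), mul_assoc, ← Real.rpow_add_one hρ.ne',
              neg_add_eq_sub, mul_pow_rpow hC.le (by norm_num), mul_assoc]
          rw [mul_left_comm, ← ENNReal.ofReal_mul (by positivity), this,
            ENNReal.ofReal_mul (by positivity), ENNReal.ofReal_pow (by positivity)]
          ring
  calc ∫⁻ x in S, ENNReal.ofReal (f x ^ (-s)) ∂μ
      ≤ ∑' j, ∫⁻ x in layer j, ENNReal.ofReal (f x ^ (-s)) ∂μ :=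
        (lintegral_mono_set hcover).trans (lintegral_iUnion_le _ _)
    _ ≤ ∑' j, c * q ^ j := ENNReal.tsum_le_tsum hlayer
    _ = c * (1 - q)⁻¹ := by rw [ENNReal.tsum_mul_left, ENNReal.tsum_geometric]
    _ < ⊤ := ENNReal.mul_lt_top (ENNReal.mul_lt_top hK.lt_top ENNReal.ofReal_lt_top)
        (ENNReal.inv_lt_top.2 (tsub_pos_of_lt hq))

theorem rpow_neg_le_add_of_min_le {a b t s : ℝ} (ha : 0 < a) (hb : 0 < b) (hs : 0 ≤ s)
    (h : min a b ≤ t) : t ^ (-s) ≤ a ^ (-s) + b ^ (-s) := by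
  rcases min_cases a b with ⟨hm, -⟩ | ⟨hm, -⟩ <;> rw [hm] at h
  · linarith [Real.rpow_le_rpow_of_nonpos ha h (neg_nonpos.2 hs), Real.rpow_nonneg hb.le (-s)]
  · linarith [Real.rpow_le_rpow_of_nonpos hb h (neg_nonpos.2 hs), Real.rpow_nonneg ha.le (-s)]

theorem min_le_infDist_compl {X : Type*} [PseudoMetricSpace X] {Ω : Set X} {Δ : X → ℝ}
    {K : NNReal} (hΔ : LipschitzWith K Δ) (hK : 0 < K) {z : X} {r : ℝ}
    (hΩ : Ω ∩ ball z r = {y ∈ ball z r | 0 < Δ y}) (hz : z ∉ Ω) {y : X}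
    (hy : y ∈ ball z (r / 2)) : min (r / 2) (Δ y / K) ≤ infDist y Ωᶜ := by
  refine (le_infDist ⟨z, hz⟩).2 fun q hq => ?_
  by_contra! hlt
  have hqr : q ∈ ball z r := by
    rw [mem_ball] at hy ⊢
    linarith [dist_triangle q y z, dist_comm q y, min_le_left (r / 2) (Δ y / K)]
  have hΔq : 0 < Δ q := by
    have h1 : Δ y - Δ q ≤ K * dist y q := by
      have := hΔ.dist_le_mul y q
      rw [Real.dist_eq] at this
      linarith [le_abs_self (Δ y - Δ q)]
    have h2 : K * dist y q < Δ y :=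
      calc (K : ℝ) * dist y q < K * (Δ y / K) :=
            mul_lt_mul_of_pos_left (hlt.trans_le (min_le_right _ _)) hK
        _ = Δ y := mul_div_cancel₀ _ (NNReal.coe_pos.2 hK).ne'
    linarith
  have : q ∈ Ω ∩ ball z r := hΩ ▸ ⟨hqr, hΔq⟩
  exact hq this.1

theorem setLIntegral_infDist_compl_rpow_neg_lt_top {E : Type*} [NormedAddCommGroup E]
    [NormedSpace ℝ E] [MeasurableSpace E] [BorelSpace E] [FiniteDimensional ℝ E]
    (μ : Measure E) [μ.IsAddHaarMeasure] {Ω : Set E} {Δ : E → ℝ} {K : NNReal}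
    (hΔ : LipschitzWith K Δ) (hK : 0 < K) {ν : E} (hν : ‖ν‖ = 1)
    (hΔν : ∀ y (c : ℝ), Δ (y + c • ν) = Δ y + c) {z : E} {r : ℝ} (hr : 0 < r)
    (hΩ : Ω ∩ ball z r = {y ∈ ball z r | 0 < Δ y}) (hz : z ∉ Ω) {s : ℝ} (hs0 : 0 ≤ s)
    (hs1 : s < 1) :
    ∫⁻ y in Ω ∩ ball z (r / 2), ENNReal.ofReal (infDist y Ωᶜ ^ (-s)) ∂μ < ⊤ := by
  set S := Ω ∩ ball z (r / 2)
  have hK' : (0 : ℝ) < K := NNReal.coe_pos.2 hK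
  have hpos : ∀ y ∈ S, 0 < Δ y := fun y hy => by
    have : y ∈ Ω ∩ ball z r := ⟨hy.1, ball_subset_ball (by linarith) hy.2⟩
    rw [hΩ] at this
    exact this.2
  have hub : ∀ y ∈ S, Δ y / K ≤ r / 2 := fun y hy => by
    have hΔz : Δ z ≤ 0 := by
      by_contra! h
      have : z ∈ Ω ∩ ball z r := hΩ ▸ ⟨mem_ball_self hr, h⟩
      exact hz this.1
    have h1 : Δ y - Δ z ≤ K * dist y z := by
      have := hΔ.dist_le_mul y z
      rw [Real.dist_eq] at this
      linarith [le_abs_self (Δ y - Δ z)]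
    rw [div_le_iff₀' hK']
    nlinarith [mem_ball.1 hy.2]
  have hslab : ∀ h, 0 < h → μ {y ∈ S | Δ y / K ≤ h} ≤
      ENNReal.ofReal (2 * K) * μ (ball z (r / 2 + 1)) * ENNReal.ofReal h := fun h hh => by
    calc μ {y ∈ S | Δ y / K ≤ h}
        ≤ μ {y ∈ ball z (r / 2) | Δ y ∈ Ioc 0 (0 + K * h)} :=
          measure_mono fun y hy => ⟨hy.1.2, hpos y hy.1, by
            rw [zero_add, ← div_le_iff₀' hK']; exact hy.2⟩
      _ ≤ ENNReal.ofReal (2 * (K * h)) * μ (ball z (r / 2 + 1)) :=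
          measure_slab_le hΔ.continuous hν hΔν z (r / 2) 0 (by positivity)
      _ = ENNReal.ofReal (2 * K) * μ (ball z (r / 2 + 1)) * ENNReal.ofReal h := by
          rw [← mul_assoc, ENNReal.ofReal_mul (by positivity)]
          ring
  have hΔint : ∫⁻ y in S, ENNReal.ofReal ((Δ y / K) ^ (-s)) ∂μ < ⊤ :=
    setLIntegral_rpow_neg_lt_top_of_measure_le (fun y hy => ⟨by have := hpos y hy; positivity,
      hub y hy⟩) (ENNReal.mul_ne_top ENNReal.ofReal_ne_top measure_ball_lt_top.ne) hslab hs0 hs1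
  have hbound : ∀ y ∈ S, ENNReal.ofReal (infDist y Ωᶜ ^ (-s)) ≤
      ENNReal.ofReal ((r / 2) ^ (-s)) + ENNReal.ofReal ((Δ y / K) ^ (-s)) := fun y hy =>
    (ENNReal.ofReal_le_ofReal (rpow_neg_le_add_of_min_le (by positivity)
      (div_pos (hpos y hy) hK') hs0 (min_le_infDist_compl hΔ hK hΩ hz hy.2))).trans
      ENNReal.ofReal_add_le
  have hm : Measurable fun y => ENNReal.ofReal ((Δ y / K) ^ (-s)) :=
    ((hΔ.continuous.measurable.div_const _).pow_const _).ennreal_ofReal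
  calc ∫⁻ y in S, ENNReal.ofReal (infDist y Ωᶜ ^ (-s)) ∂μ
      ≤ ∫⁻ y in S, (ENNReal.ofReal ((r / 2) ^ (-s)) + ENNReal.ofReal ((Δ y / K) ^ (-s))) ∂μ :=
        setLIntegral_mono (measurable_const.add hm) hbound
    _ = ENNReal.ofReal ((r / 2) ^ (-s)) * μ S + ∫⁻ y in S, ENNReal.ofReal ((Δ y / K) ^ (-s)) ∂μ :=
        by rw [lintegral_add_left measurable_const, setLIntegral_const]
    _ < ⊤ := ENNReal.add_lt_top.2 ⟨ENNReal.mul_lt_top ENNReal.ofReal_lt_top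
        ((measure_mono inter_subset_right).trans_lt measure_ball_lt_top), hΔint⟩

theorem lintegral_biUnion_finset_le {α ι : Type*} [MeasurableSpace α] {μ : Measure α}
    (t : Finset ι) (S : ι → Set α) (f : α → ℝ≥0∞) :
    ∫⁻ x in ⋃ i ∈ t, S i, f x ∂μ ≤ ∑ i ∈ t, ∫⁻ x in S i, f x ∂μ := by
  classical
  induction t using Finset.induction_on with
  | empty => simp
  | insert i t hi ih =>
    rw [Finset.set_biUnion_insert, Finset.sum_insert hi]
    exact (lintegral_union_le _ _ _).trans (add_le_add_right ih _)

section LipschitzDomain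

variable {n : ℕ} {Ω : Set (Rn n)}

/-- The frontier is compact, so finitely many Lipschitz charts cover it; on the rest of `Ω`,
a compact subset of `Ω`, the distance to `𝒞Ω` is bounded below. -/
theorem lintegral_infDist_compl_rpow_neg_lt_top (hΩo : IsOpen Ω) (hΩb : Bornology.IsBounded Ω)
    (hΩl : HasLipschitzBoundary Ω) {s : ℝ} (hs0 : 0 ≤ s) (hs1 : s < 1) :
    ∫⁻ x in Ω, ENNReal.ofReal (infDist x Ωᶜ ^ (-s)) < ⊤ := by
  rcases Ωᶜ.eq_empty_or_nonempty with hne | hne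
  · simpa [hne] using ENNReal.mul_lt_top ENNReal.ofReal_lt_top hΩb.measure_lt_top
  choose! rad hrad ν hν L ψ hψ hgraph using hΩl
  obtain ⟨t, htΩ, ht⟩ := (hΩb.isCompact_closure.of_isClosed_subset isClosed_frontier
    frontier_subset_closure).elim_nhds_subcover (fun z => ball z (rad z / 2))
    fun z hz => ball_mem_nhds z (half_pos (hrad z hz))
  set A := closure Ω \ ⋃ z ∈ t, ball z (rad z / 2)
  have hA : IsCompact A :=
    hΩb.isCompact_closure.diff (isOpen_biUnion fun _ _ => isOpen_ball)
  have hAΩ : A ⊆ Ω := fun x hx => by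
    by_contra hxΩ
    exact hx.2 (ht (hΩo.frontier_eq ▸ ⟨hx.1, hxΩ⟩))
  obtain ⟨δ, hδ, hδA⟩ := hA.exists_forall_le' (continuous_infDist_pt _).continuousOn
    fun x hx => (hΩo.isClosed_compl.notMem_iff_infDist_pos hne).1 (not_not_intro (hAΩ hx))
  have hcover : Ω ⊆ A ∪ ⋃ z ∈ t, Ω ∩ ball z (rad z / 2) := fun x hx => by
    by_cases hxN : x ∈ ⋃ z ∈ t, ball z (rad z / 2)
    · obtain ⟨z, hz, hxz⟩ := mem_iUnion₂.1 hxN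
      exact Or.inr (mem_iUnion₂.2 ⟨z, hz, hx, hxz⟩)
    · exact Or.inl ⟨subset_closure hx, hxN⟩
  have hcharts : ∀ z ∈ t,
      ∫⁻ x in Ω ∩ ball z (rad z / 2), ENNReal.ofReal (infDist x Ωᶜ ^ (-s)) < ⊤ := fun z hz => by
    have hzf := htΩ z hz
    have hgraph' : Ω ∩ ball z (rad z) = {y ∈ ball z (rad z) | 0 < graphHeight (ψ z) (ν z) y} := by
      rw [hgraph z hzf]
      simp only [graphHeight, sub_pos]
    exact setLIntegral_infDist_compl_rpow_neg_lt_top volume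
      (lipschitzWith_graphHeight (hν z hzf) (hψ z hzf)) (by positivity) (hν z hzf)
      (graphHeight_add_smul (hν z hzf) _) (hrad z hzf) hgraph'
      (hΩo.frontier_eq ▸ hzf).2 hs0 hs1
  calc ∫⁻ x in Ω, ENNReal.ofReal (infDist x Ωᶜ ^ (-s))
      ≤ (∫⁻ x in A, ENNReal.ofReal (infDist x Ωᶜ ^ (-s))) +
          ∫⁻ x in ⋃ z ∈ t, Ω ∩ ball z (rad z / 2), ENNReal.ofReal (infDist x Ωᶜ ^ (-s)) :=
        (lintegral_mono_set hcover).trans (lintegral_union_le _ _ _)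
    _ ≤ ENNReal.ofReal (δ ^ (-s)) * volume A +
          ∑ z ∈ t, ∫⁻ x in Ω ∩ ball z (rad z / 2), ENNReal.ofReal (infDist x Ωᶜ ^ (-s)) := by
        gcongr
        · rw [← setLIntegral_const]
          exact setLIntegral_mono measurable_const fun x hx => ENNReal.ofReal_le_ofReal
            (Real.rpow_le_rpow_of_nonpos hδ (hδA x hx) (neg_nonpos.2 hs0))
        · exact lintegral_biUnion_finset_le _ _ _
    _ < ⊤ := ENNReal.add_lt_top.2 ⟨ENNReal.mul_lt_top ENNReal.ofReal_lt_top hA.measure_lt_top,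
        ENNReal.sum_lt_top.2 hcharts⟩

theorem lintegral_lintegral_compl_inv_dist_rpow_lt_top (hΩo : IsOpen Ω)
    (hΩb : Bornology.IsBounded Ω) (hΩl : HasLipschitzBoundary Ω) {s : ℝ} (hs0 : 0 < s)
    (hs1 : s < 1) :
    ∫⁻ x in Ω, ∫⁻ y in Ωᶜ, ENNReal.ofReal ((dist x y ^ ((n : ℝ) + s))⁻¹) < ⊤ := by
  rcases Ωᶜ.eq_empty_or_nonempty with hne | hne
  · simp [hne]
  obtain ⟨C, hC, hCle⟩ := exists_lintegral_inv_dist_rpow_le (volume : Measure (Rn n)) hs0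
  calc ∫⁻ x in Ω, ∫⁻ y in Ωᶜ, ENNReal.ofReal ((dist x y ^ ((n : ℝ) + s))⁻¹)
      ≤ ∫⁻ x in Ω, C * ENNReal.ofReal (infDist x Ωᶜ ^ (-s)) :=
        setLIntegral_mono' hΩo.measurableSet fun x hx => by
          simpa using hCle Ωᶜ x
            ((hΩo.isClosed_compl.notMem_iff_infDist_pos hne).1 (not_not_intro hx))
    _ = C * ∫⁻ x in Ω, ENNReal.ofReal (infDist x Ωᶜ ^ (-s)) := lintegral_const_mul' _ _ hC
    _ < ⊤ := ENNReal.mul_lt_top hC.lt_top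
        (lintegral_infDist_compl_rpow_neg_lt_top hΩo hΩb hΩl hs0.le hs1)

end LipschitzDomain

theorem truncation_of_minimal_fn_is_minimal_general
    (n : ℕ) (s : ℝ) (hs : s ∈ Set.Ioo (0 : ℝ) 1)
    (Ω : Set (Rn n)) (hΩo : IsOpen Ω) (hΩb : Bornology.IsBounded Ω)
    (hΩl : HasLipschitzBoundary Ω)
    (u : Rn n → ℝ) (hu : IsMinimalFn n s Ω u) :
    ∀ (lam ε : ℝ), 0 < ε →
      IsMinimalFn n s Ω
        (fun x => ε⁻¹ * min ε (max (u x - lam + Real.sqrt ε) 0)) := by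
  intro lam ε hε
  have hK := lintegral_lintegral_compl_inv_dist_rpow_lt_top hΩo hΩb hΩl hs.1 hs.2
  have hshift : LipschitzWith 1 fun t : ℝ => t - lam + √ε :=
    LipschitzWith.of_dist_le_mul fun a b => by simp [Real.dist_eq]
  have hf : Monotone fun t : ℝ => min ε (max (t - lam + √ε) 0) :=
    (monotone_min_max 0 ε).comp fun a b hab => by linarith
  have hf1 : LipschitzWith 1 fun t : ℝ => min ε (max (t - lam + √ε) 0) := by
    have h := (lipschitzWith_min_max 0 ε).comp hshift
    rw [mul_one] at h
    exact h
  exact (hu.comp hK hΩb.measure_lt_top.ne hf hf1 fun t =>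
    ⟨le_min hε.le (le_max_right _ _), min_le_left _ _⟩).const_mul (inv_pos.2 hε)

theorem truncation_of_minimal_fn_is_minimal
    (n : ℕ) (hn : 1 ≤ n) (s : ℝ) (hs : s ∈ Set.Ioo (0 : ℝ) 1)
    (Ω : Set (Rn n)) (hΩo : IsOpen Ω) (hΩb : Bornology.IsBounded Ω)
    (hΩl : HasLipschitzBoundary Ω)
    (u : Rn n → ℝ) (hu : IsMinimalFn n s Ω u) :
    ∀ (lam ε : ℝ), 0 < ε →
      IsMinimalFn n s Ω
        (fun x => ε⁻¹ * min ε (max (u x - lam + Real.sqrt ε) 0)) :=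
  truncation_of_minimal_fn_is_minimal_general n s hs Ω hΩo hΩb hΩl u hu
end
end

section
/- Let (u_k) be a sequence of measurable functions on ℝⁿ and u : ℝⁿ → ℝ be such that ‖u_k‖_{L^∞(ℝⁿ)} ≤ M for some M > 0 and all k, and u_k → u in L¹_loc(ℝⁿ) as k → +∞. Then 𝒯_s(u_k − u, Ω) → 0 as k → +∞. -/
open MeasureTheory Set Filter Metric ENNReal

noncomputable section
set_option maxHeartbeats 1000000

/-!
The weight `w(y) = ∫_Ω |x - y|^{-n-s} dx` is integrable over `𝒞Ω`, and by Tonelli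
`𝒯_s(φ, Ω) = ∫_{𝒞Ω} |φ| w`. Integrability of `w` reduces, by scaling, to
`∫_Ω dist(x, 𝒞Ω)^{-s} dx < ∞`; the Lipschitz charts give `|{x ∈ Ω : dist(x, 𝒞Ω) < δ}| ≲ δ`,
and the layer-cake formula turns this into finiteness since `s < 1`. Finally `|u_k - u| ≤ 2M`
(the `L¹_loc` limit inherits the bound), so on the sets where `w ≤ m` inside a compact the
`L¹_loc` convergence gives smallness, while the remaining mass of `w` is uniformly small.
-/

open scoped Topology

section LocalConvergence

variable {X : Type*} [TopologicalSpace X] [SigmaCompactSpace X] [T2Space X]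
  [MeasurableSpace X] [OpensMeasurableSpace X] {μ : Measure X}

theorem ae_abs_le_of_tendsto_setLIntegral {u : ℕ → X → ℝ} {v : X → ℝ} (hv : Measurable v)
    {M : ℝ} (hbd : ∀ k, ∀ᵐ x ∂μ, |u k x| ≤ M)
    (hloc : ∀ K, IsCompact K →
      Tendsto (fun k => ∫⁻ x in K, ENNReal.ofReal |u k x - v x| ∂μ) atTop (𝓝 0)) :
    ∀ᵐ x ∂μ, |v x| ≤ M := by
  have hexcess : ∀ m, ∫⁻ x in compactCovering X m, ENNReal.ofReal (|v x| - M) ∂μ = 0 := by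
    intro m
    refine le_antisymm (ge_of_tendsto' (hloc _ (isCompact_compactCovering X m)) fun k => ?_)
      zero_le
    refine lintegral_mono_ae (ae_restrict_of_ae ?_)
    filter_upwards [hbd k] with x hx
    have h := abs_sub_abs_le_abs_sub (v x) (u k x)
    rw [abs_sub_comm (v x)] at h
    exact ENNReal.ofReal_le_ofReal (by linarith)
  have hcover : ∀ m, ∀ᵐ x ∂μ, x ∈ compactCovering X m → |v x| ≤ M := by
    intro m
    have h : ∀ᵐ x ∂μ.restrict (compactCovering X m), ENNReal.ofReal (|v x| - M) = 0 :=
      (lintegral_eq_zero_iff (by fun_prop)).mp (hexcess m)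
    rw [ae_restrict_iff' (isCompact_compactCovering X m).measurableSet] at h
    filter_upwards [h] with x hx hxm
    simpa [sub_nonpos] using hx hxm
  filter_upwards [ae_all_iff.mpr hcover] with x hx
  obtain ⟨m, hm⟩ := iUnion_eq_univ_iff.mp (iUnion_compactCovering X) x
  exact hx m hm

theorem tendsto_lintegral_mul_of_tendsto_setLIntegral {w : X → ℝ≥0∞} (hw : Measurable w)
    (hwi : ∫⁻ x, w x ∂μ ≠ ∞) {g : ℕ → X → ℝ≥0∞} {C : ℝ≥0∞} (hC : C ≠ ∞)
    (hgC : ∀ k, ∀ᵐ x ∂μ, g k x ≤ C)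
    (hg : ∀ K, IsCompact K → Tendsto (fun k => ∫⁻ x in K, g k x ∂μ) atTop (𝓝 0)) :
    Tendsto (fun k => ∫⁻ x, g k x * w x ∂μ) atTop (𝓝 0) := by
  -- `E m` exhausts `{w < ∞}`, which carries all of `μ.withDensity w`, and `w ≤ m` on `E m`
  set E : ℕ → Set X := fun m => compactCovering X m ∩ {x | w x ≤ m}
  have hEm : ∀ m, MeasurableSet (E m) := fun m =>
    (isCompact_compactCovering X m).measurableSet.inter (measurableSet_le hw measurable_const)
  have : IsFiniteMeasure (μ.withDensity w) := isFiniteMeasure_withDensity hwi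
  have hcompl : Tendsto (fun m => C * μ.withDensity w (E m)ᶜ) atTop (𝓝 0) := by
    have hanti : Antitone fun m => (E m)ᶜ := fun m m' hmm' => compl_subset_compl.mpr
      (inter_subset_inter (compactCovering_subset X hmm') fun x (hx : w x ≤ m) =>
        hx.trans (by exact_mod_cast hmm'))
    have hinf : μ.withDensity w (⋂ m, (E m)ᶜ) = 0 := by
      refine measure_mono_null (t := {x | w x = ∞}) ?_ ?_
      · intro x hx
        by_contra hwx
        obtain ⟨m₁, hm₁⟩ := iUnion_eq_univ_iff.mp (iUnion_compactCovering X) x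
        obtain ⟨m₂, hm₂⟩ := ENNReal.exists_nat_gt hwx
        exact mem_iInter.mp hx (max m₁ m₂)
          ⟨compactCovering_subset X (le_max_left _ _) hm₁,
            hm₂.le.trans (by exact_mod_cast le_max_right m₁ m₂)⟩
      · rw [withDensity_apply _ (measurableSet_eq_fun hw measurable_const)]
        exact setLIntegral_measure_zero _ _ (measure_eq_top_of_lintegral_ne_top hw.aemeasurable hwi)
    have h := tendsto_measure_iInter_atTop (μ := μ.withDensity w)
      (fun m => (hEm m).compl.nullMeasurableSet) hanti ⟨0, measure_ne_top _ _⟩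
    simpa [hinf] using ENNReal.Tendsto.const_mul h (Or.inr hC)
  refine ENNReal.tendsto_nhds_zero.mpr fun ε hε => ?_
  obtain ⟨m, hm⟩ := (hcompl.eventually (ge_mem_nhds (ENNReal.half_pos hε.ne'))).exists
  have hK := ENNReal.Tendsto.const_mul (hg _ (isCompact_compactCovering X m))
    (Or.inr (ENNReal.natCast_ne_top m))
  rw [mul_zero] at hK
  filter_upwards [hK.eventually (ge_mem_nhds (ENNReal.half_pos hε.ne'))] with k hk
  have hbulk : ∫⁻ x in E m, g k x * w x ∂μ ≤ m * ∫⁻ x in compactCovering X m, g k x ∂μ :=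
    calc ∫⁻ x in E m, g k x * w x ∂μ ≤ ∫⁻ x in E m, m * g k x ∂μ :=
          setLIntegral_mono' (hEm m) fun x hx => by
            rw [mul_comm]; exact mul_le_mul_left (show w x ≤ m from hx.2) _
      _ ≤ m * ∫⁻ x in compactCovering X m, g k x ∂μ := by
          rw [lintegral_const_mul' _ _ (ENNReal.natCast_ne_top m)]
          exact mul_le_mul_right (lintegral_mono_set inter_subset_left) _
  have hrest : ∫⁻ x in (E m)ᶜ, g k x * w x ∂μ ≤ C * μ.withDensity w (E m)ᶜ :=
    calc ∫⁻ x in (E m)ᶜ, g k x * w x ∂μ ≤ ∫⁻ x in (E m)ᶜ, C * w x ∂μ :=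
          lintegral_mono_ae ((ae_restrict_of_ae (hgC k)).mono fun x hx => mul_le_mul_left hx _)
      _ = C * μ.withDensity w (E m)ᶜ := by
          rw [lintegral_const_mul _ hw, withDensity_apply _ (hEm m).compl]
  calc ∫⁻ x, g k x * w x ∂μ
      = ∫⁻ x in E m, g k x * w x ∂μ + ∫⁻ x in (E m)ᶜ, g k x * w x ∂μ :=
        (lintegral_add_compl _ (hEm m)).symm
    _ ≤ ε / 2 + ε / 2 := add_le_add (hbulk.trans hk) (hrest.trans hm)
    _ = ε := ENNReal.add_halves ε

end LocalConvergence

theorem lintegral_rpow_neg_lt_top_of_measure_lt_le {X : Type*} [MeasurableSpace X]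
    {μ : Measure X} [IsFiniteMeasure μ] {d : X → ℝ} (hd : Measurable d) (hd0 : ∀ x, 0 ≤ d x)
    {C : ℝ≥0∞} (hC : C ≠ ∞) (hsmall : ∀ᶠ δ in 𝓝[>] 0, μ {x | d x < δ} ≤ C * ENNReal.ofReal δ)
    {s : ℝ} (hs0 : 0 < s) (hs1 : s < 1) :
    ∫⁻ x, ENNReal.ofReal (d x ^ (-s)) ∂μ < ∞ := by
  have hinv : Tendsto (fun t : ℝ => t ^ (-s)⁻¹) atTop (𝓝[>] 0) := by
    refine tendsto_nhdsWithin_iff.mpr ⟨?_, (eventually_gt_atTop 0).mono fun t ht =>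
      Real.rpow_pos_of_pos ht _⟩
    simpa only [inv_neg] using tendsto_rpow_neg_atTop (inv_pos.mpr hs0)
  have hexp : (-s)⁻¹ < -1 := by rw [inv_neg, neg_lt_neg_iff]; exact one_lt_inv_iff₀.mpr ⟨hs0, hs1⟩
  have hlevel : ∀ᶠ t in atTop, μ {x | t < d x ^ (-s)} ≤ C * ENNReal.ofReal (t ^ (-s)⁻¹) := by
    filter_upwards [hinv.eventually hsmall, eventually_gt_atTop 0] with t ht htpos
    refine (measure_mono fun x (hx : t < d x ^ (-s)) => ?_).trans ht
    calc d x = (d x ^ (-s)) ^ (-s)⁻¹ := (Real.rpow_rpow_inv (hd0 x) (neg_ne_zero.mpr hs0.ne')).symm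
      _ < t ^ (-s)⁻¹ := Real.rpow_lt_rpow_of_neg htpos hx
          (inv_lt_zero.mpr (neg_neg_iff_pos.mpr hs0))
  obtain ⟨T, hT⟩ := eventually_atTop.mp (hlevel.and (eventually_gt_atTop 0))
  have hTpos : 0 < T := (hT T le_rfl).2
  rw [lintegral_eq_lintegral_meas_lt μ (ae_of_all _ fun x => Real.rpow_nonneg (hd0 x) _)
    (hd.pow_const _).aemeasurable, ← Ioc_union_Ioi_eq_Ioi hTpos.le]
  refine (lintegral_union_le _ _ _).trans_lt (ENNReal.add_lt_top.mpr ⟨?_, ?_⟩)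
  · calc ∫⁻ t in Ioc 0 T, μ {x | t < d x ^ (-s)} ≤ ∫⁻ _ in Ioc 0 T, μ univ :=
          lintegral_mono fun t => measure_mono (subset_univ _)
      _ < ∞ := by
          rw [setLIntegral_const]; exact ENNReal.mul_lt_top (measure_lt_top _ _) (by simp)
  · calc ∫⁻ t in Ioi T, μ {x | t < d x ^ (-s)}
        ≤ ∫⁻ t in Ioi T, C * ENNReal.ofReal (t ^ (-s)⁻¹) :=
          setLIntegral_mono' measurableSet_Ioi fun t ht => (hT t (le_of_lt ht)).1
      _ = C * ∫⁻ t in Ioi T, ENNReal.ofReal (t ^ (-s)⁻¹) := lintegral_const_mul _ (by fun_prop)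
      _ < ∞ := ENNReal.mul_lt_top hC.lt_top
          (integrableOn_Ioi_rpow_of_lt hexp hTpos).lintegral_lt_top

section Kernel

variable {E : Type*} [NormedAddCommGroup E] [NormedSpace ℝ E] [FiniteDimensional ℝ E]
  [MeasurableSpace E] [BorelSpace E] (μ : Measure E) [μ.IsAddHaarMeasure]

theorem setLIntegral_compl_ball_norm_rpow_inv_lt_top {p : ℝ} (hp : (Module.finrank ℝ E : ℝ) < p) :
    ∫⁻ y in (ball (0 : E) 1)ᶜ, ENNReal.ofReal ((‖y‖ ^ p)⁻¹) ∂μ < ∞ := by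
  have hdom : ∀ y ∈ (ball (0 : E) 1)ᶜ, ENNReal.ofReal ((‖y‖ ^ p)⁻¹) ≤
      ENNReal.ofReal (2 ^ p) * ENNReal.ofReal ((1 + ‖y‖) ^ (-p)) := fun y hy => by
    have hy1 : 1 ≤ ‖y‖ := by simpa using hy
    rw [← ENNReal.ofReal_mul (by positivity)]
    refine ENNReal.ofReal_le_ofReal ?_
    calc (‖y‖ ^ p)⁻¹ = 2 ^ p * ((2 * ‖y‖) ^ p)⁻¹ := by
          rw [Real.mul_rpow zero_le_two (norm_nonneg y), mul_inv, ← mul_assoc,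
            mul_inv_cancel₀ (by positivity), one_mul]
      _ ≤ 2 ^ p * ((1 + ‖y‖) ^ p)⁻¹ := by gcongr <;> linarith
      _ = 2 ^ p * (1 + ‖y‖) ^ (-p) := by rw [Real.rpow_neg (by positivity)]
  calc ∫⁻ y in (ball (0 : E) 1)ᶜ, ENNReal.ofReal ((‖y‖ ^ p)⁻¹) ∂μ
      ≤ ∫⁻ y in (ball (0 : E) 1)ᶜ, ENNReal.ofReal (2 ^ p) * ENNReal.ofReal ((1 + ‖y‖) ^ (-p)) ∂μ :=
        setLIntegral_mono' measurableSet_ball.compl hdom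
    _ ≤ ∫⁻ y, ENNReal.ofReal (2 ^ p) * ENNReal.ofReal ((1 + ‖y‖) ^ (-p)) ∂μ :=
        setLIntegral_le_lintegral _ _
    _ < ∞ := by
        rw [lintegral_const_mul _ (by fun_prop)]
        exact ENNReal.mul_lt_top ENNReal.ofReal_lt_top (finite_integral_one_add_norm hp)

theorem lintegral_comp_smul_of_ne_zero (f : E → ℝ≥0∞) (hf : Measurable f) {r : ℝ} (hr : r ≠ 0) :
    ∫⁻ x, f (r • x) ∂μ = ENNReal.ofReal |(r ^ Module.finrank ℝ E)⁻¹| * ∫⁻ x, f x ∂μ := by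
  rw [← lintegral_map hf (measurable_const_smul r), Measure.map_addHaar_smul μ hr,
    lintegral_smul_measure, smul_eq_mul]

theorem setLIntegral_compl_ball_dist_rpow_inv (x : E) {ρ : ℝ} (hρ : 0 < ρ) (p : ℝ) :
    ∫⁻ y in (ball x ρ)ᶜ, ENNReal.ofReal ((dist x y ^ p)⁻¹) ∂μ =
      ENNReal.ofReal (ρ ^ ((Module.finrank ℝ E : ℝ) - p)) *
        ∫⁻ y in (ball (0 : E) 1)ᶜ, ENNReal.ofReal ((‖y‖ ^ p)⁻¹) ∂μ := by
  set g : E → ℝ≥0∞ := (ball (0 : E) 1)ᶜ.indicator fun y => ENNReal.ofReal ((‖y‖ ^ p)⁻¹)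
  have hg : Measurable g := Measurable.indicator (by fun_prop) measurableSet_ball.compl
  have hscale : ∀ y, (ball x ρ)ᶜ.indicator (fun y => ENNReal.ofReal ((dist x y ^ p)⁻¹)) y =
      ENNReal.ofReal (ρ ^ (-p)) * g (ρ⁻¹ • (y - x)) := fun y => by
    have hnorm : ‖ρ⁻¹ • (y - x)‖ = ρ⁻¹ * dist x y := by
      rw [norm_smul, Real.norm_of_nonneg (inv_nonneg.mpr hρ.le), dist_comm, dist_eq_norm]
    have hmem : y ∈ ball x ρ ↔ ρ⁻¹ • (y - x) ∈ ball (0 : E) 1 := by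
      rw [mem_ball, mem_ball_zero_iff, hnorm, dist_comm, inv_mul_lt_one₀ hρ]
    by_cases hy : y ∈ ball x ρ
    · simp [g, hy, hmem.mp hy]
    · simp only [g, indicator_of_mem (mem_compl hy), indicator_of_mem (mem_compl (hmem.not.mp hy)),
        hnorm, ← ENNReal.ofReal_mul (Real.rpow_nonneg hρ.le _)]
      rw [Real.mul_rpow (inv_nonneg.mpr hρ.le) dist_nonneg, Real.inv_rpow hρ.le, mul_inv, inv_inv,
        ← mul_assoc, Real.rpow_neg hρ.le, inv_mul_cancel₀ (by positivity), one_mul]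
  rw [← lintegral_indicator measurableSet_ball.compl,
    ← lintegral_indicator measurableSet_ball.compl]
  simp_rw [hscale]
  rw [lintegral_const_mul' _ _ ENNReal.ofReal_ne_top,
    lintegral_sub_right_eq_self (fun y => g (ρ⁻¹ • y)) x,
    lintegral_comp_smul_of_ne_zero μ g hg (inv_ne_zero hρ.ne'), ← mul_assoc,
    ← ENNReal.ofReal_mul (by positivity)]
  congr 2
  rw [inv_pow, inv_inv, abs_of_pos (by positivity), ← Real.rpow_natCast, ← Real.rpow_add hρ]
  ring_nf

end Kernel

section GraphGap

variable {E : Type*} [NormedAddCommGroup E] [InnerProductSpace ℝ E] {ν : E} {ψ : E → ℝ}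

/-- Height of `y` above the graph of `ψ` over `ν^⊥`: a chart of `HasLipschitzBoundary` says
that near a boundary point `Ω` is `{graphGap ν ψ > 0}`. -/
def graphGap (ν : E) (ψ : E → ℝ) (y : E) : ℝ :=
  inner ℝ y ν - ψ (y - inner ℝ y ν • ν)

theorem lipschitzWith_graphGap (hν : ‖ν‖ = 1) {L : NNReal} (hψ : LipschitzWith L ψ) :
    LipschitzWith (1 + L) (graphGap ν ψ) := by
  have hinner : LipschitzWith 1 fun y : E => inner ℝ y ν :=
    LipschitzWith.of_dist_le_mul fun a b => by
      simpa [dist_eq_norm, ← inner_sub_left, hν] using abs_real_inner_le_norm (a - b) ν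
  have hproj : (fun y : E => y - inner ℝ y ν • ν) = (ℝ ∙ ν)ᗮ.starProjection := by
    ext y
    rw [Submodule.starProjection_orthogonal, sub_apply,
      Submodule.starProjection_unit_singleton ℝ hν, real_inner_comm]
    rfl
  have h := hinner.sub (hψ.comp (hproj ▸ Submodule.lipschitzWith_starProjection _))
  rwa [mul_one] at h

theorem continuous_graphGap (hψ : Continuous ψ) : Continuous (graphGap ν ψ) := by
  unfold graphGap; fun_prop

theorem graphGap_add_smul (hν : ‖ν‖ = 1) (y : E) (c : ℝ) :
    graphGap ν ψ (y + c • ν) = graphGap ν ψ y + c := by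
  have hinner : inner ℝ (y + c • ν) ν = inner ℝ y ν + c := by
    rw [inner_add_left, real_inner_smul_left, real_inner_self_eq_norm_sq, hν]; ring
  have hproj : y + c • ν - (inner ℝ y ν + c) • ν = y - inner ℝ y ν • ν := by
    rw [add_smul]; abel
  simp only [graphGap, hinner, hproj]; ring

theorem measure_ball_inter_graphGap_Ioc_le [MeasurableSpace E] [BorelSpace E] (μ : Measure E)
    [μ.IsAddRightInvariant] (hν : ‖ν‖ = 1) (hψ : Continuous ψ) (x₀ : E) {r τ : ℝ} (hr : 0 < r)
    (hτ : 0 < τ) :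
    μ (ball x₀ r ∩ graphGap ν ψ ⁻¹' Ioc 0 τ) ≤ ENNReal.ofReal (τ / r) * μ (ball x₀ (2 * r)) := by
  set S := ball x₀ r ∩ graphGap ν ψ ⁻¹' Ioc 0 τ
  have hS : MeasurableSet S :=
    measurableSet_ball.inter ((continuous_graphGap hψ).measurable measurableSet_Ioc)
  -- the translates of `S` by `j τ ν`, `j < N`, are disjoint and stay in the doubled ball
  set N := ⌊r / τ⌋₊ + 1
  set T : ℕ → Set E := fun j => (· + ((j : ℝ) * τ) • ν) ⁻¹' S
  have hmemT : ∀ j y, y ∈ T j ↔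
      y + ((j : ℝ) * τ) • ν ∈ ball x₀ r ∧ graphGap ν ψ y + j * τ ∈ Ioc 0 τ := fun j y => by
    simp [T, S, graphGap_add_smul hν]
  have hdisj : Pairwise (Function.onFun Disjoint T) := (pairwise_disjoint_on T).mpr fun i j hij =>
    Set.disjoint_left.mpr fun y hyi hyj => by
      have hi := ((hmemT i y).mp hyi).2
      have hj := ((hmemT j y).mp hyj).2
      have hij' : (i : ℝ) + 1 ≤ j := by exact_mod_cast hij
      nlinarith [hi.1, hj.2]
  have hsub : ∀ j < N, T j ⊆ ball x₀ (2 * r) := fun j hj y hy => by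
    have hjτ : (j : ℝ) * τ ≤ r := by
      have h1 : (j : ℝ) ≤ ⌊r / τ⌋₊ := by exact_mod_cast Nat.lt_succ_iff.mp hj
      have h2 : (⌊r / τ⌋₊ : ℝ) ≤ r / τ := Nat.floor_le (by positivity)
      calc (j : ℝ) * τ ≤ r / τ * τ := by gcongr; linarith
        _ = r := div_mul_cancel₀ r hτ.ne'
    have hshift : dist y (y + ((j : ℝ) * τ) • ν) = j * τ := by
      rw [dist_self_add_right, norm_smul, hν, mul_one, Real.norm_of_nonneg (by positivity)]
    have htri := dist_triangle y (y + ((j : ℝ) * τ) • ν) x₀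
    rw [mem_ball]
    linarith [mem_ball.mp ((hmemT j y).mp hy).1]
  have hcount : (N : ℝ≥0∞) * μ S ≤ μ (ball x₀ (2 * r)) :=
    calc (N : ℝ≥0∞) * μ S = ∑ j ∈ Finset.range N, μ (T j) := by
          simp [T, measure_preimage_add_right]
      _ = μ (⋃ j ∈ Finset.range N, T j) :=
          (measure_biUnion_finset (hdisj.set_pairwise _)
            fun j _ => hS.preimage (measurable_add_const _)).symm
      _ ≤ μ (ball x₀ (2 * r)) :=
          measure_mono (iUnion₂_subset fun j hj => hsub j (Finset.mem_range.mp hj))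
  have hN : 1 ≤ ENNReal.ofReal (τ / r) * N := by
    rw [← ENNReal.ofReal_natCast, ← ENNReal.ofReal_mul (by positivity), ← ENNReal.ofReal_one]
    refine ENNReal.ofReal_le_ofReal ?_
    have h1 : r / τ < N := by simpa [N] using Nat.lt_floor_add_one (r / τ)
    rw [div_lt_iff₀ hτ] at h1
    rw [div_mul_eq_mul_div, le_div_iff₀ hr]
    linarith
  calc μ S ≤ ENNReal.ofReal (τ / r) * N * μ S := le_mul_of_one_le_left zero_le hN
    _ = ENNReal.ofReal (τ / r) * (N * μ S) := mul_assoc _ _ _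
    _ ≤ ENNReal.ofReal (τ / r) * μ (ball x₀ (2 * r)) := mul_le_mul_right hcount _

end GraphGap

theorem exists_volume_inter_infDist_compl_lt_le {n : ℕ} {Ω : Set (Rn n)} (hΩo : IsOpen Ω)
    (hΩb : Bornology.IsBounded Ω) (hΩl : HasLipschitzBoundary Ω) (hΩ : Ω ≠ univ) :
    ∃ C : ℝ≥0∞, C ≠ ∞ ∧
      ∀ᶠ δ in 𝓝[>] 0, volume (Ω ∩ {x | infDist x Ωᶜ < δ}) ≤ C * ENNReal.ofReal δ := by
  choose! r hr ν hν L ψ hψ hchart using hΩl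
  have hchart_iff : ∀ z ∈ frontier Ω, ∀ y ∈ ball z (r z), y ∈ Ω ↔ 0 < graphGap (ν z) (ψ z) y :=
    fun z hz y hy => by
      simpa [graphGap, mem_ball.mp hy, sub_pos] using Set.ext_iff.mp (hchart z hz) y
  obtain ⟨t, htf, htc⟩ := (hΩb.isCompact_closure.of_isClosed_subset isClosed_frontier
    frontier_subset_closure).elim_nhds_subcover (fun z => ball z (r z / 2))
      fun z hz => ball_mem_nhds z (half_pos (hr z hz))
  refine ⟨∑ z ∈ t, ENNReal.ofReal ((1 + L z) / r z) * volume (ball z (2 * r z)),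
    ENNReal.sum_ne_top.mpr fun z _ => ENNReal.mul_ne_top ENNReal.ofReal_ne_top
      measure_ball_lt_top.ne, ?_⟩
  have hsmall : ∀ᶠ δ in 𝓝[>] (0 : ℝ), 0 < δ ∧ ∀ z ∈ t, δ < r z / 2 :=
    eventually_mem_nhdsWithin.and ((eventually_all_finset t).mpr fun z hz =>
      eventually_nhdsWithin_of_eventually_nhds (eventually_lt_nhds (half_pos (hr z (htf z hz)))))
  filter_upwards [hsmall] with δ ⟨hδ, hδr⟩
  -- a point of `Ω` within `δ` of the boundary lies in a thin slab of the chart around its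
  -- nearest boundary point
  have hcover : Ω ∩ {x | infDist x Ωᶜ < δ} ⊆
      ⋃ z ∈ t, ball z (r z) ∩ graphGap (ν z) (ψ z) ⁻¹' Ioc 0 ((1 + L z) * δ) := by
    rintro x ⟨hxΩ, hxd⟩
    obtain ⟨w, hwf, hwd⟩ := exists_mem_frontier_infDist_compl_eq_dist hxΩ hΩ
    obtain ⟨z, hzt, hwz⟩ : ∃ z ∈ t, w ∈ ball z (r z / 2) := by simpa using htc hwf
    have hz := htf z hzt
    have hxw : dist x w < δ := hwd ▸ hxd
    have hxz : x ∈ ball z (r z) :=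
      mem_ball.mpr (by linarith [dist_triangle x w z, mem_ball.mp hwz, hδr z hzt])
    have hwz' : w ∈ ball z (r z) := ball_subset_ball (by linarith [hr z hz]) hwz
    have hgx := (hchart_iff z hz x hxz).mp hxΩ
    have hgw : graphGap (ν z) (ψ z) w ≤ 0 :=
      not_lt.mp fun h => (hΩo.frontier_eq ▸ hwf).2 ((hchart_iff z hz w hwz').mpr h)
    have hlip := (lipschitzWith_graphGap (hν z hz) (hψ z hz)).dist_le_mul x w
    rw [Real.dist_eq, NNReal.coe_add, NNReal.coe_one] at hlip
    refine mem_biUnion hzt ⟨hxz, hgx, ?_⟩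
    nlinarith [le_abs_self (graphGap (ν z) (ψ z) x - graphGap (ν z) (ψ z) w), (L z).2]
  calc volume (Ω ∩ {x | infDist x Ωᶜ < δ})
      ≤ ∑ z ∈ t, volume (ball z (r z) ∩ graphGap (ν z) (ψ z) ⁻¹' Ioc 0 ((1 + L z) * δ)) :=
        (measure_mono hcover).trans (measure_biUnion_finset_le _ _)
    _ ≤ ∑ z ∈ t, ENNReal.ofReal ((1 + L z) * δ / r z) * volume (ball z (2 * r z)) :=
        Finset.sum_le_sum fun z hz => measure_ball_inter_graphGap_Ioc_le volume
          (hν z (htf z hz)) (hψ z (htf z hz)).continuous z (hr z (htf z hz)) (by positivity)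
    _ = _ := by
        rw [Finset.sum_mul]
        refine Finset.sum_congr rfl fun z hz => ?_
        rw [mul_div_right_comm,
          ENNReal.ofReal_mul (div_nonneg (by positivity) (hr z (htf z hz)).le)]
        ring

section Tail

variable {n : ℕ} {s : ℝ} {Ω : Set (Rn n)}

def tailWeight (n : ℕ) (s : ℝ) (Ω : Set (Rn n)) (y : Rn n) : ℝ≥0∞ :=
  ∫⁻ x in Ω, ENNReal.ofReal ((dist x y ^ ((n : ℝ) + s))⁻¹)

theorem measurable_ofReal_dist_rpow_inv (n : ℕ) (p : ℝ) :
    Measurable fun q : Rn n × Rn n => ENNReal.ofReal ((dist q.1 q.2 ^ p)⁻¹) := by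
  fun_prop

theorem measurable_tailWeight : Measurable (tailWeight n s Ω) :=
  (measurable_ofReal_dist_rpow_inv n _).lintegral_prod_left'

theorem tailS_eq_setLIntegral_mul_tailWeight {φ : Rn n → ℝ} (hφ : Measurable φ) :
    tailS n s Ω φ = ∫⁻ y in Ωᶜ, ENNReal.ofReal |φ y| * tailWeight n s Ω y := by
  have hsplit : ∀ x y : Rn n, ENNReal.ofReal (|φ y| / dist x y ^ ((n : ℝ) + s)) =
      ENNReal.ofReal |φ y| * ENNReal.ofReal ((dist x y ^ ((n : ℝ) + s))⁻¹) := fun x y => by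
    rw [div_eq_mul_inv, ENNReal.ofReal_mul (abs_nonneg _)]
  unfold tailS tailWeight
  simp_rw [hsplit]
  rw [lintegral_lintegral_swap ?_]
  · refine lintegral_congr fun y => lintegral_const_mul _ ?_
    fun_prop
  · exact (((hφ.comp measurable_snd).abs.ennreal_ofReal).mul
      (measurable_ofReal_dist_rpow_inv n _)).aemeasurable

theorem setLIntegral_tailWeight :
    ∫⁻ y in Ωᶜ, tailWeight n s Ω y = tailS n s Ω (fun _ => 1) := by
  simp [tailS_eq_setLIntegral_mul_tailWeight measurable_const]

theorem tailS_one_lt_top (hs : s ∈ Ioo 0 1) (hΩo : IsOpen Ω) (hΩb : Bornology.IsBounded Ω)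
    (hΩl : HasLipschitzBoundary Ω) : tailS n s Ω (fun _ => 1) < ⊤ := by
  rcases eq_or_ne Ω univ with rfl | hΩ
  · simp [tailS]
  obtain ⟨C, hC, hstrip⟩ := exists_volume_inter_infDist_compl_lt_le hΩo hΩb hΩl hΩ
  set c := ∫⁻ y in (ball (0 : Rn n) 1)ᶜ, ENNReal.ofReal ((‖y‖ ^ ((n : ℝ) + s))⁻¹)
  have hc : c < ∞ := setLIntegral_compl_ball_norm_rpow_inv_lt_top volume (by simpa using hs.1)
  have hinner : ∀ x ∈ Ω, ∫⁻ y in Ωᶜ, ENNReal.ofReal (|1| / dist x y ^ ((n : ℝ) + s)) ≤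
      ENNReal.ofReal (infDist x Ωᶜ ^ (-s)) * c := fun x hx => by
    have hρ : 0 < infDist x Ωᶜ := (hΩo.isClosed_compl.notMem_iff_infDist_pos
      (nonempty_compl.mpr hΩ)).mp (not_not_intro hx)
    calc ∫⁻ y in Ωᶜ, ENNReal.ofReal (|1| / dist x y ^ ((n : ℝ) + s))
        ≤ ∫⁻ y in (ball x (infDist x Ωᶜ))ᶜ, ENNReal.ofReal ((dist x y ^ ((n : ℝ) + s))⁻¹) := by
          simp only [abs_one, one_div]
          exact lintegral_mono_set fun y hy => by
            simpa [dist_comm] using infDist_le_dist_of_mem (x := x) hy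
      _ = ENNReal.ofReal (infDist x Ωᶜ ^ (-s)) * c := by
          rw [setLIntegral_compl_ball_dist_rpow_inv volume x hρ, finrank_euclideanSpace_fin,
            show (n : ℝ) - (n + s) = -s by ring]
  have : IsFiniteMeasure (volume.restrict Ω) := isFiniteMeasure_restrict.mpr hΩb.measure_lt_top.ne
  have hd : ∫⁻ x in Ω, ENNReal.ofReal (infDist x Ωᶜ ^ (-s)) < ∞ := by
    refine lintegral_rpow_neg_lt_top_of_measure_lt_le (continuous_infDist_pt _).measurable
      (fun _ => infDist_nonneg) hC (hstrip.mono fun δ hδ => ?_) hs.1 hs.2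
    rwa [Measure.restrict_apply (measurableSet_lt (continuous_infDist_pt _).measurable
      measurable_const), inter_comm]
  calc tailS n s Ω (fun _ => 1) ≤ ∫⁻ x in Ω, ENNReal.ofReal (infDist x Ωᶜ ^ (-s)) * c :=
        setLIntegral_mono' hΩo.measurableSet hinner
    _ = (∫⁻ x in Ω, ENNReal.ofReal (infDist x Ωᶜ ^ (-s))) * c := lintegral_mul_const' _ _ hc.ne
    _ < ∞ := ENNReal.mul_lt_top hd hc

end Tail

theorem tail_convergence_of_bounded_L1loc_convergent_sequence_general
    (n : ℕ) (s : ℝ) (hs : s ∈ Set.Ioo (0 : ℝ) 1)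
    (Ω : Set (Rn n)) (hΩo : IsOpen Ω) (hΩb : Bornology.IsBounded Ω)
    (hΩl : HasLipschitzBoundary Ω)
    (u : ℕ → Rn n → ℝ) (hum : ∀ k, Measurable (u k))
    (v : Rn n → ℝ) (hv : Measurable v) (M : ℝ)
    (hbd : ∀ k, ∀ᵐ x : Rn n ∂volume, |u k x| ≤ M)
    (hloc : ∀ K : Set (Rn n), IsCompact K →
      Tendsto (fun k => ∫⁻ x in K, ENNReal.ofReal |u k x - v x|) atTop (nhds 0)) :
    Tendsto (fun k => tailS n s Ω (fun y => u k y - v y)) atTop (nhds 0) := by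
  have hvM := ae_abs_le_of_tendsto_setLIntegral hv hbd hloc
  have htail : ∀ k, tailS n s Ω (fun y => u k y - v y) =
      ∫⁻ y in Ωᶜ, ENNReal.ofReal |u k y - v y| * tailWeight n s Ω y := fun k =>
    tailS_eq_setLIntegral_mul_tailWeight ((hum k).sub hv)
  simp only [htail]
  refine tendsto_lintegral_mul_of_tendsto_setLIntegral measurable_tailWeight
    (setLIntegral_tailWeight.trans_lt (tailS_one_lt_top hs hΩo hΩb hΩl)).ne
    (C := ENNReal.ofReal (2 * M)) ENNReal.ofReal_ne_top (fun k => ?_) (fun K hK => ?_)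
  · refine ae_restrict_of_ae ?_
    filter_upwards [hbd k, hvM] with y huy hvy
    exact ENNReal.ofReal_le_ofReal (by linarith [abs_sub (u k y) (v y)])
  · refine tendsto_of_tendsto_of_tendsto_of_le_of_le tendsto_const_nhds (hloc K hK)
      (fun _ => zero_le) (fun k => ?_)
    exact lintegral_mono' (Measure.restrict_mono subset_rfl Measure.restrict_le_self) le_rfl

theorem tail_convergence_of_bounded_L1loc_convergent_sequence
    (n : ℕ) (hn : 1 ≤ n) (s : ℝ) (hs : s ∈ Set.Ioo (0 : ℝ) 1)
    (Ω : Set (Rn n)) (hΩo : IsOpen Ω) (hΩb : Bornology.IsBounded Ω)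
    (hΩl : HasLipschitzBoundary Ω)
    (u : ℕ → Rn n → ℝ) (hum : ∀ k, Measurable (u k))
    (v : Rn n → ℝ) (hv : Measurable v) (M : ℝ) (hM : 0 < M)
    (hbd : ∀ k, ∀ᵐ x : Rn n ∂volume, |u k x| ≤ M)
    (hloc : ∀ K : Set (Rn n), IsCompact K →
      Tendsto (fun k => ∫⁻ x in K, ENNReal.ofReal |u k x - v x|) atTop (nhds 0)) :
    Tendsto (fun k => tailS n s Ω (fun y => u k y - v y)) atTop (nhds 0) :=
  tail_convergence_of_bounded_L1loc_convergent_sequence_general n s hs Ω hΩo hΩb hΩl u hum v hv M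
    hbd hloc
end
end

section
/- Let E₀ ⊂ 𝒞Ω and let E, F ⊂ ℝⁿ both be s-minimal sets in Ω with respect to E₀. Then E ∪ F and E ∩ F are also s-minimal sets in Ω with respect to E₀. -/
open MeasureTheory Set Filter Metric ENNReal

noncomputable section
set_option maxHeartbeats 1000000

/-!
The fractional perimeter is submodular,
`Per_s(E ∪ F, Ω) + Per_s(E ∩ F, Ω) ≤ Per_s(E, Ω) + Per_s(F, Ω)`, already pointwise at the
level of the integrands. If `E` and `F` are minimal with the same exterior datum, then `E ∪ F`
and `E ∩ F` are admissible competitors for `E` and `F` respectively, so each of the two terms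
on the left is at least its counterpart on the right; finiteness of the perimeters forces
equality, and a competitor with the minimal perimeter is itself minimal.
-/

lemma abs_indicator_sub_union_add_inter_le {α : Type*} (E F : Set α) (x y : α) :
    |(E ∪ F).indicator (1 : α → ℝ) x - (E ∪ F).indicator 1 y|
        + |(E ∩ F).indicator 1 x - (E ∩ F).indicator 1 y| ≤
      |E.indicator 1 x - E.indicator 1 y| + |F.indicator 1 x - F.indicator 1 y| := by
  classical
  by_cases hxE : x ∈ E <;> by_cases hxF : x ∈ F <;> by_cases hyE : y ∈ E <;>
    by_cases hyF : y ∈ F <;> simp [Set.indicator, hxE, hxF, hyE, hyF]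

lemma measurable_perS_integrand {n : ℕ} (s : ℝ) {E : Set (Rn n)} (hE : MeasurableSet E) :
    Measurable fun p : Rn n × Rn n =>
      ENNReal.ofReal (|chi E p.1 - chi E p.2| / dist p.1 p.2 ^ ((n : ℝ) + s)) := by
  have hchi : Measurable (chi E) := measurable_const.indicator hE
  exact ((hchi.comp measurable_fst).sub (hchi.comp measurable_snd)).abs.div
    (measurable_dist.pow_const _) |>.ennreal_ofReal

lemma perS_union_add_perS_inter_le {n : ℕ} (s : ℝ) (Ω : Set (Rn n)) {E : Set (Rn n)}
    (F : Set (Rn n)) (hE : MeasurableSet E) :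
    perS n s Ω (E ∪ F) + perS n s Ω (E ∩ F) ≤ perS n s Ω E + perS n s Ω F := by
  simp only [perS, ← mul_add]
  refine mul_le_mul_right ((le_lintegral_add _ _).trans ?_) _
  rw [← lintegral_add_left (measurable_perS_integrand s hE)]
  refine lintegral_mono fun p => ?_
  have hd : 0 ≤ dist p.1 p.2 ^ ((n : ℝ) + s) := Real.rpow_nonneg dist_nonneg _
  simp only [← ENNReal.ofReal_add (div_nonneg (abs_nonneg _) hd) (div_nonneg (abs_nonneg _) hd),
    ← add_div]
  exact ENNReal.ofReal_le_ofReal <|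
    div_le_div_of_nonneg_right (abs_indicator_sub_union_add_inter_le E F p.1 p.2) hd

lemma ENNReal.le_and_le_of_add_le_add {a b c d : ℝ≥0∞} (h : a + b ≤ c + d) (hca : c ≤ a)
    (hdb : d ≤ b) (hc : c ≠ ⊤) (hd : d ≠ ⊤) : a ≤ c ∧ b ≤ d := by
  have hcd : c + d ≠ ⊤ := ENNReal.add_ne_top.mpr ⟨hc, hd⟩
  have ha : a ≠ ⊤ := ne_top_of_le_ne_top hcd (le_self_add.trans h)
  have hb : b ≠ ⊤ := ne_top_of_le_ne_top hcd (le_add_self.trans h)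
  exact ⟨ENNReal.le_of_add_le_add_right hb (h.trans (add_le_add_right hdb c)),
    ENNReal.le_of_add_le_add_left ha (h.trans (add_le_add_left hca d))⟩

lemma IsMinimalSet.of_perS_le {n : ℕ} {s : ℝ} {Ω E G : Set (Rn n)}
    (hE : IsMinimalSet n s Ω E) (hG : MeasurableSet G) (hGE : G \ Ω = E \ Ω)
    (hle : perS n s Ω G ≤ perS n s Ω E) : IsMinimalSet n s Ω G :=
  ⟨hG, hle.trans_lt hE.2.1, fun F hF hFG => hle.trans (hE.2.2 F hF (hFG.trans hGE))⟩

theorem union_and_inter_of_minimal_sets_are_minimal_general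
    (n : ℕ) (s : ℝ)
    (Ω : Set (Rn n))
    (E₀ E F : Set (Rn n))
    (hE : IsMinimalSet n s Ω E) (hEdat : E \ Ω = E₀)
    (hF : IsMinimalSet n s Ω F) (hFdat : F \ Ω = E₀) :
    (IsMinimalSet n s Ω (E ∪ F) ∧ (E ∪ F) \ Ω = E₀) ∧
    (IsMinimalSet n s Ω (E ∩ F) ∧ (E ∩ F) \ Ω = E₀) := by
  have hUE : (E ∪ F) \ Ω = E \ Ω := by rw [union_sdiff_distrib, hEdat, hFdat, union_self]
  have hIF : (E ∩ F) \ Ω = F \ Ω := by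
    rw [show (E ∩ F) \ Ω = (E \ Ω) ∩ (F \ Ω) from inf_sdiff, hEdat, hFdat, inter_self]
  have hUm : MeasurableSet (E ∪ F) := hE.1.union hF.1
  have hIm : MeasurableSet (E ∩ F) := hE.1.inter hF.1
  obtain ⟨hUle, hIle⟩ := ENNReal.le_and_le_of_add_le_add
    (perS_union_add_perS_inter_le s Ω F hE.1) (hE.2.2 _ hUm hUE) (hF.2.2 _ hIm hIF)
    hE.2.1.ne hF.2.1.ne
  exact ⟨⟨hE.of_perS_le hUm hUE hUle, hUE.trans hEdat⟩,
    ⟨hF.of_perS_le hIm hIF hIle, hIF.trans hFdat⟩⟩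

theorem union_and_inter_of_minimal_sets_are_minimal
    (n : ℕ) (hn : 1 ≤ n) (s : ℝ) (hs : s ∈ Set.Ioo (0 : ℝ) 1)
    (Ω : Set (Rn n)) (hΩo : IsOpen Ω) (hΩb : Bornology.IsBounded Ω)
    (hΩl : HasLipschitzBoundary Ω)
    (E₀ E F : Set (Rn n)) (hE₀ : E₀ ⊆ Ωᶜ)
    (hE : IsMinimalSet n s Ω E) (hEdat : E \ Ω = E₀)
    (hF : IsMinimalSet n s Ω F) (hFdat : F \ Ω = E₀) :
    (IsMinimalSet n s Ω (E ∪ F) ∧ (E ∪ F) \ Ω = E₀) ∧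
    (IsMinimalSet n s Ω (E ∩ F) ∧ (E ∩ F) \ Ω = E₀) :=
  union_and_inter_of_minimal_sets_are_minimal_general n s Ω E₀ E F hE hEdat hF hFdat

end
end
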